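/- arXiv:1206.4774 — 9 statements merged into one kernel-verified Lean document; each statement's English description precedes it below -/
import Mathlib

section
/- Let k be a field of characteristic ≠ 2 and d ∈ k*. Let v = [[0,1],[d,0]], a 2×2 matrix over k of trace zero with −det(v) = d. Then: (i) every 2×2 matrix w over k with trace zero and −det(w) = d is of the form w = g v g⁻¹ for some g ∈ GL₂(k); and (ii) for g₁, g₂ ∈ GL₂(k), the matrices g₁ v g₁⁻¹ and g₂ v g₂⁻¹ are conjugate by an element of SL₂(k) if and only if there exist a, b ∈ k with det(g₁) = det(g₂)·(a² − d·b²). In particular, the SL₂(k)-conjugacy orbits on trace-zero 2×2 matrices w with −det(w) = d are in bijection with the quotient group k*/N(K*), where K = k[x]/(x² − d) and N(a + bx) = a² − d·b². -/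
/-!
A trace-zero `w` with `-det w = d ≠ 0` satisfies `w² = d` and, in characteristic `≠ 2`, is not
scalar, so it has a cyclic vector `y`; in the basis `(w y, y)` it becomes `v = !![0, 1; d, 0]`.
An `SL₂`-conjugacy `s (g₁ v g₁⁻¹) = (g₂ v g₂⁻¹) s` is the same as `t = g₂⁻¹ s g₁` commuting with
`v`, i.e. `t = !![a, b; d * b, a]`, whose determinant is the norm `a² - d b²`; comparing
determinants gives `det g₁ = det g₂ · (a² - d b²)`. Hence `c ↦ g v g⁻¹` for any `g` with
`det g = c` induces the bijection between `k*/N(K*)` and the orbits.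
-/

open Matrix Function

theorem Units.semiconjBy_conj_iff_commute {M : Type*} [Monoid M] (g₁ g₂ : Mˣ) (s v : M) :
    SemiconjBy s (g₁ * v * ↑g₁⁻¹) (g₂ * v * ↑g₂⁻¹) ↔ Commute (↑g₂⁻¹ * s * g₁) v := by
  rw [Commute, SemiconjBy, SemiconjBy, ← Units.mul_right_inj g₂⁻¹, ← Units.mul_left_inj g₁]
  simp only [mul_assoc, Units.inv_mul, Units.inv_mul_cancel_left, mul_one]

theorem Matrix.equivalence_semiconjBy_of_det_eq_one {n R : Type*} [Fintype n] [DecidableEq n]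
    [CommRing R] :
    Equivalence fun A B : Matrix n n R => ∃ s : Matrix n n R, s.det = 1 ∧ SemiconjBy s A B where
  refl A := ⟨1, det_one, SemiconjBy.one_left A⟩
  symm := by
    rintro A B ⟨s, hs, hAB⟩
    have hu : IsUnit s.det := hs ▸ isUnit_one
    exact ⟨s⁻¹, by rw [det_nonsing_inv, hs, Ring.inverse_one],
      SemiconjBy.units_inv_symm_left (a := nonsingInvUnit s hu) hAB⟩
  trans := by
    rintro A B C ⟨s, hs, hAB⟩ ⟨t, ht, hBC⟩
    exact ⟨t * s, by rw [det_mul, hs, ht, one_mul], hBC.mul_left hAB⟩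

noncomputable def Quot.equivOfSurjective {α β : Type*} {r : α → α → Prop} {s : β → β → Prop}
    (hr : Equivalence r) (f : β → α) (hf : ∀ a, ∃ b, r (f b) a)
    (hfs : ∀ b₁ b₂, r (f b₁) (f b₂) ↔ s b₁ b₂) : Quot r ≃ Quot s :=
  have hsurj : Surjective (Quot.mk r ∘ f) := by
    rintro ⟨a⟩
    exact (hf a).imp fun _ hb ↦ Quot.sound hb
  have hker : ∀ b₁ b₂, Quot.mk r (f b₁) = Quot.mk r (f b₂) ↔ s b₁ b₂ := fun b₁ b₂ ↦ by
    rw [← hfs, ← hr.eqvGen_iff]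
    exact ⟨Quot.eqvGen_exact, Quot.eqvGen_sound⟩
  ((Setoid.quotientKerEquivOfSurjective _ hsurj).symm.trans (Quot.congrRight hker))

section CommRing

variable {R : Type*} [CommRing R]

theorem Matrix.commute_fin_two_iff (d : R) (t : Matrix (Fin 2) (Fin 2) R) :
    Commute t !![0, 1; d, 0] ↔ ∃ a b : R, t = !![a, b; d * b, a] := by
  constructor
  · intro h
    have h₀₀ := congrFun (congrFun h 0) 0
    have h₀₁ := congrFun (congrFun h 0) 1
    simp only [mul_apply, of_apply, cons_val', cons_val_zero, cons_val_one, cons_val_fin_one,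
      Fin.sum_univ_two, mul_zero, zero_add, zero_mul, one_mul, mul_one, add_zero] at h₀₀ h₀₁
    have h₁₀ : t 1 0 = d * t 0 1 := by linear_combination -h₀₀
    have h₁₁ : t 1 1 = t 0 0 := by linear_combination -h₀₁
    exact ⟨t 0 0, t 0 1, (eta_fin_two t).trans (by rw [h₁₀, h₁₁])⟩
  · rintro ⟨a, b, rfl⟩
    ext i j
    fin_cases i <;> fin_cases j <;> simp [mul_apply, Fin.sum_univ_two, mul_comm]

theorem Matrix.mul_cols_mulVec_self_eq (w : Matrix (Fin 2) (Fin 2) R) (htr : w.trace = 0)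
    (y : Fin 2 → R) :
    w * !![(w *ᵥ y) 0, y 0; (w *ᵥ y) 1, y 1] =
      !![(w *ᵥ y) 0, y 0; (w *ᵥ y) 1, y 1] * !![0, 1; -w.det, 0] := by
  rw [trace_fin_two] at htr
  ext i j
  fin_cases i <;> fin_cases j <;>
    simp only [mul_apply, Fin.sum_univ_two, mulVec, dotProduct, det_fin_two, of_apply, cons_val',
      cons_val_zero, cons_val_one, cons_val_fin_one, Fin.zero_eta, Fin.mk_one, Fin.isValue]
  · linear_combination (w 0 0 * y 0 + w 0 1 * y 1) * htr
  · ring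
  · linear_combination (w 1 0 * y 0 + w 1 1 * y 1) * htr
  · ring

theorem Matrix.trace_and_neg_det_units_conj_fin_two (d : R) (g : GL (Fin 2) R) :
    trace ((g : Matrix (Fin 2) (Fin 2) R) * !![0, 1; d, 0] * (↑g⁻¹ : Matrix (Fin 2) (Fin 2) R))
        = 0 ∧
      -det ((g : Matrix (Fin 2) (Fin 2) R) * !![0, 1; d, 0] * (↑g⁻¹ : Matrix (Fin 2) (Fin 2) R))
        = d := by
  rw [trace_units_conj, det_units_conj]
  simp [trace_fin_two, det_fin_two]

end CommRing

section Field

variable {k : Type*} [Field k]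

/-- One of `e₀`, `e₁`, `e₀ + e₁` is a cyclic vector, as `w` is not scalar. -/
theorem Matrix.exists_det_cols_mulVec_ne_zero (h2 : (2 : k) ≠ 0) (w : Matrix (Fin 2) (Fin 2) k)
    (htr : w.trace = 0) (hdet : w.det ≠ 0) :
    ∃ y : Fin 2 → k, !![(w *ᵥ y) 0, y 0; (w *ᵥ y) 1, y 1].det ≠ 0 := by
  by_contra! h
  have h₀ := h ![1, 0]
  have h₁ := h ![0, 1]
  have h₂ := h ![1, 1]
  simp only [mulVec, dotProduct, Fin.sum_univ_two, det_fin_two, of_apply, cons_val', cons_val_zero,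
    cons_val_one, cons_val_fin_one, mul_one, mul_zero, one_mul, zero_mul, add_zero, zero_add,
    sub_zero, zero_sub, neg_eq_zero] at h₀ h₁ h₂
  rw [trace_fin_two] at htr
  rw [det_fin_two, h₀, h₁] at hdet
  have : w 0 0 = 0 := by
    refine (mul_eq_zero.mp ?_).resolve_left h2
    linear_combination htr + h₂ - h₁ + h₀
  simp_all

theorem Matrix.exists_conj_fin_two_eq (h2 : (2 : k) ≠ 0) {d : k} (hd : d ≠ 0)
    (w : Matrix (Fin 2) (Fin 2) k) (htr : w.trace = 0) (hdet : -w.det = d) :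
    ∃ g : GL (Fin 2) k,
      w = (g : Matrix (Fin 2) (Fin 2) k) * !![0, 1; d, 0] * (↑g⁻¹ : Matrix (Fin 2) (Fin 2) k) := by
  obtain ⟨y, hy⟩ := exists_det_cols_mulVec_ne_zero h2 w htr fun h ↦ hd (by simp [← hdet, h])
  refine ⟨GeneralLinearGroup.mkOfDetNeZero _ hy, ?_⟩
  rw [Units.eq_mul_inv_iff_mul_eq, ← hdet]
  exact mul_cols_mulVec_self_eq w htr y

theorem Matrix.exists_det_eq_one_semiconjBy_conj_iff (d : k) (g₁ g₂ : GL (Fin 2) k) :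
    (∃ s : Matrix (Fin 2) (Fin 2) k, s.det = 1 ∧
        SemiconjBy s ((g₁ : Matrix (Fin 2) (Fin 2) k) * !![0, 1; d, 0] * (↑g₁⁻¹ : Matrix _ _ k))
          ((g₂ : Matrix (Fin 2) (Fin 2) k) * !![0, 1; d, 0] * (↑g₂⁻¹ : Matrix _ _ k))) ↔
      ∃ a b : k, det (g₁ : Matrix (Fin 2) (Fin 2) k) =
        det (g₂ : Matrix (Fin 2) (Fin 2) k) * (a ^ 2 - d * b ^ 2) := by
  simp_rw [Units.semiconjBy_conj_iff_commute, commute_fin_two_iff]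
  constructor
  · rintro ⟨s, hs, a, b, ht⟩
    have hdet := congrArg det (congrArg ((g₂ : Matrix (Fin 2) (Fin 2) k) * ·) ht)
    simp only [← mul_assoc, Units.mul_inv, one_mul, det_mul, hs, det_fin_two_of] at hdet
    exact ⟨a, b, by linear_combination hdet⟩
  · rintro ⟨a, b, hab⟩
    have hg₁ : det (g₁ : Matrix (Fin 2) (Fin 2) k) * det (↑g₁⁻¹ : Matrix (Fin 2) (Fin 2) k)
        = 1 := by
      rw [← det_mul, Units.mul_inv, det_one]
    refine ⟨(g₂ : Matrix (Fin 2) (Fin 2) k) * !![a, b; d * b, a] * (↑g₁⁻¹ : Matrix _ _ k), ?_,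
      a, b, ?_⟩
    · rw [det_mul, det_mul, det_fin_two_of, ← hg₁, hab]
      ring
    · simp [mul_assoc]

end Field

/-- Let `k` be a field of characteristic `≠ 2` and `d ∈ k*`.  Let `v = [[0,1],[d,0]]`, a
trace-zero `2×2` matrix with `-det v = d`.  Then:
(i) every trace-zero `w` with `-det w = d` equals `g v g⁻¹` for some `g ∈ GL₂(k)`;
(ii) `g₁ v g₁⁻¹` and `g₂ v g₂⁻¹` are conjugate by an element of `SL₂(k)` iff
`det g₁ = det g₂ · (a² - d·b²)` for some `a, b ∈ k`;
and in particular the `SL₂(k)`-orbits of trace-zero matrices `w` with `-det w = d` are in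
bijection with `k*/N(K*)` where `K = k[x]/(x²-d)` has norm `N(a+bx) = a² - d·b²`. -/
theorem sl2_orbits_on_trace_zero_matrices {k : Type*} [Field k] (hchar : (2 : k) ≠ 0)
    (d : k) (hd : d ≠ 0) :
    (∀ w : Matrix (Fin 2) (Fin 2) k, Matrix.trace w = 0 → -Matrix.det w = d →
      ∃ g : GL (Fin 2) k,
        w = (g : Matrix (Fin 2) (Fin 2) k) * !![0, 1; d, 0] *
          ((g⁻¹ : GL (Fin 2) k) : Matrix (Fin 2) (Fin 2) k)) ∧
    (∀ g₁ g₂ : GL (Fin 2) k,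
      (∃ s : Matrix (Fin 2) (Fin 2) k, Matrix.det s = 1 ∧
          s * ((g₁ : Matrix (Fin 2) (Fin 2) k) * !![0, 1; d, 0] *
              ((g₁⁻¹ : GL (Fin 2) k) : Matrix (Fin 2) (Fin 2) k)) =
            ((g₂ : Matrix (Fin 2) (Fin 2) k) * !![0, 1; d, 0] *
              ((g₂⁻¹ : GL (Fin 2) k) : Matrix (Fin 2) (Fin 2) k)) * s) ↔
        ∃ a b : k, Matrix.det (g₁ : Matrix (Fin 2) (Fin 2) k) =
          Matrix.det (g₂ : Matrix (Fin 2) (Fin 2) k) * (a ^ 2 - d * b ^ 2)) ∧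
    Nonempty (
      Quot (fun w₁ w₂ : {w : Matrix (Fin 2) (Fin 2) k //
            Matrix.trace w = 0 ∧ -Matrix.det w = d} =>
          ∃ s : Matrix (Fin 2) (Fin 2) k, Matrix.det s = 1 ∧ s * w₁.val = w₂.val * s) ≃
      Quot (fun c₁ c₂ : kˣ => ∃ a b : k, (c₁ : k) = (c₂ : k) * (a ^ 2 - d * b ^ 2))) := by
  refine ⟨exists_conj_fin_two_eq hchar hd, exists_det_eq_one_semiconjBy_conj_iff d, ?_⟩
  obtain ⟨σ, hσ⟩ : ∃ σ : kˣ → GL (Fin 2) k, ∀ c, det (σ c : Matrix (Fin 2) (Fin 2) k) = c :=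
    ⟨_, fun c ↦ congrArg Units.val (surjInv_eq GeneralLinearGroup.det_surjective c)⟩
  refine ⟨Quot.equivOfSurjective (equivalence_semiconjBy_of_det_eq_one.comap Subtype.val)
    (fun c ↦ ⟨(σ c : Matrix (Fin 2) (Fin 2) k) * !![0, 1; d, 0] * (↑(σ c)⁻¹ : Matrix _ _ k),
      trace_and_neg_det_units_conj_fin_two d (σ c)⟩) ?_ ?_⟩
  · rintro ⟨w, htr, hdet⟩
    obtain ⟨g, rfl⟩ := exists_conj_fin_two_eq hchar hd w htr hdet
    exact ⟨GeneralLinearGroup.det g,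
      (exists_det_eq_one_semiconjBy_conj_iff d _ _).2 ⟨1, 0, by simp [hσ]⟩⟩
  · intro c₁ c₂
    exact (exists_det_eq_one_semiconjBy_conj_iff d _ _).trans (by simp only [hσ])
end

section
/- Let k be a field of characteristic ≠ 2, n ≥ 1, and f ∈ k[x] monic separable of degree 2n+1. Let L = k[x]/(f), let β be the image of x, let c : L → k be the coefficient-of-β^{2n} functional with respect to the basis {1,β,…,β^{2n}}, and define ⟨λ,μ⟩ = c(λμ). Then: (i) ⟨·,·⟩ is a symmetric bilinear form on L which is nondegenerate, and its Gram matrix with respect to the basis {1,β,…,β^{2n}} has determinant exactly (−1)ⁿ; (ii) the multiplication map t(λ) = βλ is self-adjoint, i.e. ⟨βλ,μ⟩ = ⟨λ,βμ⟩ for all λ,μ ∈ L, and its characteristic polynomial equals f(x); (iii) the subspace M = span_k{1,β,…,β^{n−1}} is an n-dimensional totally isotropic subspace for ⟨·,·⟩. -/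
open Polynomial

/-
The form `⟨λ, μ⟩ = c(λμ)` is symmetric and makes multiplication by `β` self-adjoint because
`L` is commutative. Since `c(β^i) = 0` for `i < 2n` and `c(β^{2n}) = 1`, the Gram matrix
`(c(β^{i+j}))` in the power basis vanishes above the antidiagonal and is `1` on it, so its
determinant is the sign `(-1)^{(2n+1 choose 2)} = (-1)^n` of the reversal permutation; in
particular the form is nondegenerate. For the same reason `⟨β^i, β^j⟩ = 0` whenever
`i, j < n`, which makes `span{1, …, β^{n-1}}` isotropic. Finally the characteristic polynomial
of multiplication by a generator of a power basis is its minimal polynomial, here `f`.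
-/

theorem Matrix.det_eq_neg_one_pow_of_antidiagonal {R : Type*} [CommRing R] :
    ∀ {m : ℕ} (A : Matrix (Fin m) (Fin m) R),
      (∀ i j : Fin m, (i : ℕ) + j + 1 < m → A i j = 0) →
      (∀ i j : Fin m, (i : ℕ) + j + 1 = m → A i j = 1) →
      A.det = (-1) ^ m.choose 2
  | 0, A, _, _ => by simp
  | m + 1, A, h0, h1 => by
    have hminor : (A.submatrix Fin.succ (Fin.last m).succAbove).det = (-1) ^ m.choose 2 :=
      det_eq_neg_one_pow_of_antidiagonal _
        (fun i j hij => h0 _ _ (by simp [Fin.succAbove_last]; omega))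
        (fun i j hij => h1 _ _ (by simp [Fin.succAbove_last]; omega))
    -- in the expansion along the first row only the last column survives
    rw [det_succ_row_zero, Finset.sum_eq_single (Fin.last m), hminor, h1 0 _ (by simp),
      Fin.val_last, mul_one, ← pow_add, Nat.choose_succ_succ, Nat.choose_one_right]
    · intro j _ hj
      rw [h0 0 j (by simp [Fin.val_lt_last hj]), mul_zero, zero_mul]
    · simp

theorem neg_one_pow_choose_two_two_mul_add_one {R : Type*} [Monoid R] [HasDistribNeg R]
    (n : ℕ) : (-1 : R) ^ (2 * n + 1).choose 2 = (-1) ^ n := by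
  have hchoose : (2 * n + 1).choose 2 = n + 2 * (n * n) := by
    rw [Nat.choose_two_right, Nat.add_sub_cancel]
    exact Nat.div_eq_of_eq_mul_left two_pos (by ring)
  rw [hchoose, pow_add, pow_mul, neg_one_sq, one_pow, mul_one]

theorem LinearMap.eq_zero_of_mem_span₂ {R M N P : Type*} [CommSemiring R] [AddCommMonoid M]
    [AddCommMonoid N] [AddCommMonoid P] [Module R M] [Module R N] [Module R P]
    (B : M →ₗ[R] N →ₗ[R] P) {s : Set M} {t : Set N} (h : ∀ x ∈ s, ∀ y ∈ t, B x y = 0)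
    {x : M} {y : N} (hx : x ∈ Submodule.span R s) (hy : y ∈ Submodule.span R t) :
    B x y = 0 := by
  have hs : ∀ x' ∈ s, B x' y = 0 := fun x' hx' =>
    LinearMap.eqOn_span (f := B x') (g := 0) (fun y' hy' => h x' hx' y' hy') hy
  exact LinearMap.eqOn_span (f := B.flip y) (g := 0) hs hx

theorem PowerBasis.charpoly_mulLeft_gen {R S : Type*} [CommRing R] [Ring S] [Algebra R S]
    [Module.Free R S] [Module.Finite R S] (pb : PowerBasis R S) :
    (LinearMap.mulLeft R pb.gen).charpoly = minpoly R pb.gen := by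
  rw [← LinearMap.charpoly_toMatrix _ pb.basis, ← charpoly_leftMulMatrix,
    Algebra.leftMulMatrix_apply]
  rfl

theorem finrank_span_pow_of_basis {k A : Type*} [Field k] [Ring A] [Algebra k A] {m n : ℕ}
    {β : A} (b : Module.Basis (Fin m) k A) (hb : ∀ i, b i = β ^ (i : ℕ)) (hnm : n ≤ m) :
    Module.finrank k (Submodule.span k (Set.range fun i : Fin n => β ^ (i : ℕ))) = n := by
  have hli : LinearIndependent k fun i : Fin n => β ^ (i : ℕ) := by
    convert b.linearIndependent.comp _ (Fin.castLE_injective hnm) with i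
    simp [hb]
  rw [finrank_span_eq_card hli, Fintype.card_fin]

def mulPairing {k A : Type*} [CommRing k] [CommRing A] [Algebra k A] (c : A →ₗ[k] k) :
    LinearMap.BilinForm k A :=
  (LinearMap.mul k A).compr₂ c

section mulPairing

variable {k A : Type*} [CommRing k] [CommRing A] [Algebra k A] {c : A →ₗ[k] k} {β : A}

@[simp]
theorem mulPairing_apply (x y : A) : mulPairing c x y = c (x * y) := rfl

theorem det_mulPairing_pow {m : ℕ} (hc : ∀ i ≤ m, c (β ^ i) = if i = m then 1 else 0) :
    (Matrix.of fun i j : Fin (m + 1) => c (β ^ (i : ℕ) * β ^ (j : ℕ))).det =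
      (-1) ^ (m + 1).choose 2 :=
  Matrix.det_eq_neg_one_pow_of_antidiagonal _
    (fun i j hij => by rw [Matrix.of_apply, ← pow_add, hc _ (by omega), if_neg (by omega)])
    (fun i j hij => by rw [Matrix.of_apply, ← pow_add, hc _ (by omega), if_pos (by omega)])

theorem mulPairing_nondegenerate [IsDomain k] {m : ℕ} (b : Module.Basis (Fin (m + 1)) k A)
    (hb : ∀ i, b i = β ^ (i : ℕ)) (hc : ∀ i ≤ m, c (β ^ i) = if i = m then 1 else 0) :
    (mulPairing c).Nondegenerate := by
  refine LinearMap.BilinForm.nondegenerate_of_det_ne_zero (B₃ := mulPairing c) b ?_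
  have hgram : LinearMap.BilinForm.toMatrix b (mulPairing c) =
      Matrix.of fun i j : Fin (m + 1) => c (β ^ (i : ℕ) * β ^ (j : ℕ)) := by
    ext i j
    simp [LinearMap.BilinForm.toMatrix_apply, hb]
  rw [hgram, det_mulPairing_pow hc]
  exact pow_ne_zero _ (neg_ne_zero.mpr one_ne_zero)

theorem mulPairing_eq_zero_of_mem_span_pow {n : ℕ} (hc : ∀ i, i + 1 < 2 * n → c (β ^ i) = 0)
    {x y : A} (hx : x ∈ Submodule.span k (Set.range fun i : Fin n => β ^ (i : ℕ)))
    (hy : y ∈ Submodule.span k (Set.range fun i : Fin n => β ^ (i : ℕ))) :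
    mulPairing c x y = 0 := by
  refine (mulPairing c).eq_zero_of_mem_span₂ ?_ hx hy
  rintro _ ⟨i, rfl⟩ _ ⟨j, rfl⟩
  rw [mulPairing_apply, ← pow_add, hc _ (by omega)]

end mulPairing

theorem symmetric_form_on_adjoinRoot_general {k : Type*} [Field k]
    (n : ℕ)
    (f : k[X]) (hm : f.Monic) (hdeg : f.natDegree = 2 * n + 1)
    (c : AdjoinRoot f →ₗ[k] k)
    (hc : ∀ i : ℕ, i ≤ 2 * n → c (AdjoinRoot.root f ^ i) = if i = 2 * n then 1 else 0)
    (B : AdjoinRoot f → AdjoinRoot f → k)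
    (hB : ∀ lam mu : AdjoinRoot f, B lam mu = c (lam * mu)) :
    -- (i) symmetric, nondegenerate, Gram determinant `(-1)ⁿ`
    (∀ lam mu : AdjoinRoot f, B lam mu = B mu lam) ∧
    (∀ lam : AdjoinRoot f, (∀ mu : AdjoinRoot f, B lam mu = 0) → lam = 0) ∧
    (Matrix.det (Matrix.of fun i j : Fin (2 * n + 1) =>
        B (AdjoinRoot.root f ^ (i : ℕ)) (AdjoinRoot.root f ^ (j : ℕ))) = (-1 : k) ^ n) ∧
    -- (ii) multiplication by `β` is self-adjoint with characteristic polynomial `f`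
    (∀ lam mu : AdjoinRoot f,
      B (AdjoinRoot.root f * lam) mu = B lam (AdjoinRoot.root f * mu)) ∧
    (∀ b : Module.Basis (Fin (2 * n + 1)) k (AdjoinRoot f),
      haveI : Module.Finite k (AdjoinRoot f) := Module.Finite.of_basis b
      LinearMap.charpoly (LinearMap.mulLeft k (AdjoinRoot.root f)) = f) ∧
    -- (iii) the span of `1, β, …, β^{n-1}` is `n`-dimensional and totally isotropic
    (Module.finrank k
        (Submodule.span k (Set.range fun i : Fin n => AdjoinRoot.root f ^ (i : ℕ))) = n ∧
      ∀ lam ∈ Submodule.span k (Set.range fun i : Fin n => AdjoinRoot.root f ^ (i : ℕ)),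
      ∀ mu ∈ Submodule.span k (Set.range fun i : Fin n => AdjoinRoot.root f ^ (i : ℕ)),
        B lam mu = 0) := by
  obtain rfl : B = fun lam mu => mulPairing c lam mu := funext₂ hB
  let pb := AdjoinRoot.powerBasis' hm
  let b := pb.basis.reindex (finCongr (show pb.dim = 2 * n + 1 by simp [pb, hdeg]))
  have hb : ∀ i, b i = AdjoinRoot.root f ^ (i : ℕ) := by simp [b, pb]
  refine ⟨fun lam mu => by simp [mul_comm], (mulPairing_nondegenerate b hb hc).1, ?_,
    fun lam mu => by simp [mul_assoc, mul_left_comm], fun b' => ?_,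
    finrank_span_pow_of_basis b hb (by omega),
    fun lam hlam mu hmu => mulPairing_eq_zero_of_mem_span_pow (fun i hi => ?_) hlam hmu⟩
  · rw [← neg_one_pow_choose_two_two_mul_add_one]
    exact det_mulPairing_pow hc
  · have := Module.Finite.of_basis b'
    rw [← AdjoinRoot.powerBasis'_gen hm, pb.charpoly_mulLeft_gen, AdjoinRoot.powerBasis'_gen,
      AdjoinRoot.minpoly_root hm.ne_zero, hm.leadingCoeff, inv_one, map_one, mul_one]
  · rw [hc i (by omega), if_neg (by omega)]

/-- Let `k` be a field of characteristic `≠ 2`, `n ≥ 1`, and `f ∈ k[x]` monic separable of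
degree `2n+1`.  Let `L = k[x]/(f)`, `β` the image of `x`, `c : L → k` the
coefficient-of-`β^{2n}` functional with respect to the basis `{1, β, …, β^{2n}}`, and
`⟨λ,μ⟩ = c(λμ)`.  Then: (i) `⟨·,·⟩` is symmetric and nondegenerate, and its Gram matrix in
the basis `{1, β, …, β^{2n}}` has determinant `(-1)ⁿ`; (ii) multiplication by `β` is
self-adjoint, with characteristic polynomial `f`; (iii) the span of `1, β, …, β^{n-1}` is
an `n`-dimensional totally isotropic subspace. -/
theorem symmetric_form_on_adjoinRoot {k : Type*} [Field k] (hchar : (2 : k) ≠ 0)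
    (n : ℕ) (hn : 1 ≤ n)
    (f : k[X]) (hm : f.Monic) (hdeg : f.natDegree = 2 * n + 1) (hsep : f.Separable)
    (c : AdjoinRoot f →ₗ[k] k)
    (hc : ∀ i : ℕ, i ≤ 2 * n → c (AdjoinRoot.root f ^ i) = if i = 2 * n then 1 else 0)
    (B : AdjoinRoot f → AdjoinRoot f → k)
    (hB : ∀ lam mu : AdjoinRoot f, B lam mu = c (lam * mu)) :
    -- (i) symmetric, nondegenerate, Gram determinant `(-1)ⁿ`
    (∀ lam mu : AdjoinRoot f, B lam mu = B mu lam) ∧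
    (∀ lam : AdjoinRoot f, (∀ mu : AdjoinRoot f, B lam mu = 0) → lam = 0) ∧
    (Matrix.det (Matrix.of fun i j : Fin (2 * n + 1) =>
        B (AdjoinRoot.root f ^ (i : ℕ)) (AdjoinRoot.root f ^ (j : ℕ))) = (-1 : k) ^ n) ∧
    -- (ii) multiplication by `β` is self-adjoint with characteristic polynomial `f`
    (∀ lam mu : AdjoinRoot f,
      B (AdjoinRoot.root f * lam) mu = B lam (AdjoinRoot.root f * mu)) ∧
    (∀ b : Module.Basis (Fin (2 * n + 1)) k (AdjoinRoot f),
      haveI : Module.Finite k (AdjoinRoot f) := Module.Finite.of_basis b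
      LinearMap.charpoly (LinearMap.mulLeft k (AdjoinRoot.root f)) = f) ∧
    -- (iii) the span of `1, β, …, β^{n-1}` is `n`-dimensional and totally isotropic
    (Module.finrank k
        (Submodule.span k (Set.range fun i : Fin n => AdjoinRoot.root f ^ (i : ℕ))) = n ∧
      ∀ lam ∈ Submodule.span k (Set.range fun i : Fin n => AdjoinRoot.root f ^ (i : ℕ)),
      ∀ mu ∈ Submodule.span k (Set.range fun i : Fin n => AdjoinRoot.root f ^ (i : ℕ)),
        B lam mu = 0) :=
  symmetric_form_on_adjoinRoot_general n f hm hdeg c hc B hB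
end

section
/- Let k be a field of characteristic ≠ 2, let n ≥ 1, let W be the split orthogonal space of dimension 2n+1 over k, and let f ∈ k[x] be any monic separable polynomial of degree 2n+1. Then there exists a k-linear endomorphism T of W which is self-adjoint, i.e. ⟨Tv,w⟩ = ⟨v,Tw⟩ for all v,w ∈ W, and whose characteristic polynomial equals f(x). -/
/-!
Let `A = k[X]/(f)` with basis `1, x, …, x^{2n}` and let `λ` be the last coordinate.
Multiplication by `x` is self-adjoint for the symmetric form `(u, v) ↦ λ(uv)`, whose Gram matrix
is the Hankel matrix `H = (λ(x^{i+j}))`. It vanishes above the anti-diagonal and is `1` on it, so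
`H = J U` with `J` the anti-diagonal Gram matrix of the split form and `U` a unipotent upper
triangular Toeplitz matrix, i.e. a polynomial in the nilpotent shift. Since `2` is invertible,
Newton's method gives a square root `P` of `U` that is again a polynomial in the shift; such
matrices satisfy `Pᵀ J = J P`, so `H = Pᵀ J P`, and conjugating multiplication by `x` by `P`
gives a `J`-self-adjoint matrix with characteristic polynomial `f`.
-/

open Polynomial

/-- The Gram matrix of the split orthogonal space of dimension `2n+1` over `k`, in the
standard basis `e₁, …, eₙ, u, fₙ, …, f₁`: it is the anti-diagonal matrix of `1`s. -/
def splitGram (k : Type*) [Field k] (n : ℕ) : Matrix (Fin (2 * n + 1)) (Fin (2 * n + 1)) k :=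
  Matrix.of fun i j => if (i : ℕ) + (j : ℕ) = 2 * n then 1 else 0

/-- The symmetric bilinear form `⟨·,·⟩` of the split orthogonal space of dimension `2n+1`. -/
def splitBilin {k : Type*} [Field k] {n : ℕ} (v w : Fin (2 * n + 1) → k) : k :=
  dotProduct v ((splitGram k n).mulVec w)

open Matrix

theorem exists_sq_eq_of_isNilpotent_sub_one {S : Type*} [CommRing S] (h2 : IsUnit (2 : S))
    {u : S} (hu : IsNilpotent (u - 1)) : ∃ r : S, r ^ 2 = u := by
  have hP : aeval (1 : S) (X ^ 2 - C u) = -(u - 1) := by simp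
  have hP' : aeval (1 : S) (derivative (X ^ 2 - C u)) = 2 := by simp [one_add_one_eq_two]
  obtain ⟨r, -, hr⟩ := (existsUnique_nilpotent_sub_and_aeval_eq_zero
    (hP ▸ hu.neg) (hP' ▸ h2)).exists
  exact ⟨r, by simpa [sub_eq_zero] using hr⟩

theorem Polynomial.exists_X_pow_dvd_sq_sub {R : Type*} [CommRing R] (h2 : IsUnit (2 : R))
    {p : R[X]} (hp : p.coeff 0 = 1) (m : ℕ) : ∃ q : R[X], X ^ m ∣ q ^ 2 - p := by
  let I := Ideal.span {(X ^ m : R[X])}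
  let π := Ideal.Quotient.mk I
  have hnil : IsNilpotent (π p - 1) := by
    obtain ⟨g, hg⟩ : X ∣ p - 1 := X_dvd_iff.mpr (by simp [hp])
    refine ⟨m, ?_⟩
    rw [← map_one π, ← map_sub, ← map_pow, Ideal.Quotient.eq_zero_iff_mem, hg, mul_pow]
    exact Ideal.mul_mem_right _ _ (Ideal.mem_span_singleton_self _)
  have h2' : IsUnit (2 : R[X] ⧸ I) := by simpa [map_ofNat] using h2.map (π.comp C)
  obtain ⟨r, hr⟩ := exists_sq_eq_of_isNilpotent_sub_one h2' hnil
  obtain ⟨q, rfl⟩ := Ideal.Quotient.mk_surjective r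
  refine ⟨q, Ideal.mem_span_singleton.mp (Ideal.Quotient.eq_zero_iff_mem.mp ?_)⟩
  rw [map_sub, map_pow, hr, sub_self]

namespace Matrix

variable {R : Type*} [CommRing R] {m : ℕ}

variable (R m) in
def upperShift : Matrix (Fin m) (Fin m) R := of fun i j => if (i : ℕ) + 1 = j then 1 else 0

theorem upperShift_pow_apply (r : ℕ) (i j : Fin m) :
    (upperShift R m ^ r) i j = if (i : ℕ) + r = j then 1 else 0 := by
  induction r generalizing j with
  | zero => simp [one_apply, Fin.ext_iff]
  | succ r ih =>
    rw [pow_succ, mul_apply,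
      Finset.sum_eq_single_of_mem ⟨(j : ℕ) - 1, by omega⟩ (Finset.mem_univ _)]
    · rw [ih]
      simp only [upperShift, of_apply]
      split_ifs <;> simp <;> omega
    · intro l _ hl
      simp only [upperShift, of_apply]
      rw [if_neg, mul_zero]
      exact fun h => hl (Fin.ext (by simp; omega))

theorem aeval_upperShift_apply (p : R[X]) (i j : Fin m) :
    aeval (upperShift R m) p i j = if i ≤ j then p.coeff (j - i) else 0 := by
  rw [aeval_eq_sum_range, sum_apply]
  simp only [smul_apply, upperShift_pow_apply, smul_eq_mul, mul_ite, mul_one, mul_zero]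
  split_ifs with hij
  · rw [Finset.sum_eq_single ((j : ℕ) - i) (fun r _ hr => if_neg (by omega)), if_pos (by omega)]
    intro hr
    rw [if_pos (by omega), coeff_eq_zero_of_natDegree_lt (by simp at hr; omega)]
  · exact Finset.sum_eq_zero fun r _ => if_neg (by rw [Fin.le_iff_val_le_val] at hij; omega)

theorem aeval_upperShift_eq_of_X_pow_dvd_sub {p q : R[X]} (h : X ^ m ∣ p - q) :
    aeval (upperShift R m) p = aeval (upperShift R m) q := by
  ext i j
  have hcoeff := (X_pow_dvd_iff.mp h) (j - i) (by omega)
  rw [coeff_sub, sub_eq_zero] at hcoeff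
  simp only [aeval_upperShift_apply, hcoeff]

theorem det_aeval_upperShift (p : R[X]) : (aeval (upperShift R m) p).det = p.coeff 0 ^ m := by
  rw [det_of_isUpperTriangular fun i j (hij : j < i) => by
    rw [aeval_upperShift_apply, if_neg hij.not_ge]]
  simp [aeval_upperShift_apply]

theorem isSelfAdjoint_aeval_upperShift (p : R[X]) :
    (Fin.revPerm.permMatrix R).IsSelfAdjoint (aeval (upperShift R m) p) := by
  ext i j
  simp only [PEquiv.toMatrix_toPEquiv_mul, PEquiv.mul_toMatrix_toPEquiv, submatrix_apply,
    transpose_apply, aeval_upperShift_apply, Fin.revPerm_symm, Fin.revPerm_apply, id,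
    Fin.le_iff_val_le_val, Fin.val_rev]
  have := i.isLt
  have := j.isLt
  split_ifs <;> first | rfl | omega | (congr 1; omega)

variable (m) in
def hankel (h : ℕ → R) : Matrix (Fin m) (Fin m) R := of fun i j => h (i + j)

theorem hankel_eq_permMatrix_revPerm_mul_aeval_upperShift {h : ℕ → R}
    (h0 : ∀ r < m, h r = 0) :
    hankel (m + 1) h = Fin.revPerm.permMatrix R *
      aeval (upperShift R (m + 1)) (∑ r ∈ Finset.range (m + 1), C (h (m + r)) * X ^ r) := by
  ext i j
  simp only [hankel, of_apply, PEquiv.toMatrix_toPEquiv_mul, submatrix_apply, id,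
    Fin.revPerm_apply, aeval_upperShift_apply, Fin.le_iff_val_le_val, Fin.val_rev,
    finsetSum_coeff, coeff_C_mul_X_pow]
  have := i.isLt
  have := j.isLt
  split_ifs with hij
  · rw [Finset.sum_ite_eq _ _ _, if_pos (Finset.mem_range.mpr (by omega))]
    congr 1
    omega
  · exact h0 _ (by omega)

theorem exists_isUnit_transpose_mul_permMatrix_revPerm_mul_eq_hankel (h2 : IsUnit (2 : R))
    {h : ℕ → R} (h0 : ∀ r < m, h r = 0) (h1 : h m = 1) :
    ∃ P : Matrix (Fin (m + 1)) (Fin (m + 1)) R,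
      IsUnit P ∧ Pᵀ * Fin.revPerm.permMatrix R * P = hankel (m + 1) h := by
  set ℓ : R[X] := ∑ r ∈ Finset.range (m + 1), C (h (m + r)) * X ^ r
  have hℓ : ℓ.coeff 0 = 1 := by simp [ℓ, h1]
  obtain ⟨q, hq⟩ := exists_X_pow_dvd_sq_sub h2 hℓ (m + 1)
  set P := aeval (upperShift R (m + 1)) q
  have hPP : P * P = aeval (upperShift R (m + 1)) ℓ := by
    rw [← map_mul, ← sq, aeval_upperShift_eq_of_X_pow_dvd_sub hq]
  refine ⟨P, ?_, ?_⟩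
  · refine (isUnit_iff_isUnit_det P).mpr (IsUnit.of_mul_eq_one P.det ?_)
    rw [← det_mul, hPP, det_aeval_upperShift, hℓ, one_pow]
  · rw [isSelfAdjoint_aeval_upperShift q, mul_assoc, hPP,
      hankel_eq_permMatrix_revPerm_mul_aeval_upperShift h0]

end Matrix

theorem Algebra.isSelfAdjoint_leftMulMatrix {R A ι : Type*} [CommRing R] [CommRing A]
    [Algebra R A] [Fintype ι] [DecidableEq ι] (b : Module.Basis ι R A) (φ : A →ₗ[R] R)
    (x : A) :
    (LinearMap.toMatrix₂ b b ((LinearMap.mul R A).compr₂ φ)).IsSelfAdjoint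
      (Algebra.leftMulMatrix b x) := by
  rw [Matrix.IsSelfAdjoint, ← isAdjointPair_toLinearMap₂ b b, Matrix.toLinearMap₂_toMatrix₂,
    Algebra.leftMulMatrix_apply, Matrix.toLin_toMatrix]
  intro u v
  simp [mul_assoc, mul_left_comm]

theorem Polynomial.Monic.exists_charpoly_eq_isSelfAdjoint_hankel {k : Type*} [Field k] {f : k[X]}
    (hf : f.Monic) {m : ℕ} (hdeg : f.natDegree = m + 1) :
    ∃ (C : Matrix (Fin (m + 1)) (Fin (m + 1)) k) (h : ℕ → k), C.charpoly = f ∧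
      (hankel (m + 1) h).IsSelfAdjoint C ∧ (∀ r < m, h r = 0) ∧ h m = 1 := by
  let pb := AdjoinRoot.powerBasis hf.ne_zero
  have := pb.finite
  let b := pb.basis.reindex (finCongr hdeg)
  have hb (i : Fin (m + 1)) : b i = pb.gen ^ (i : ℕ) := by
    rw [Module.Basis.reindex_apply, PowerBasis.coe_basis]
    rfl
  let h (r : ℕ) : k := b.coord (Fin.last m) (pb.gen ^ r)
  have hcoord (r : ℕ) (hr : r < m + 1) : h r = if r = m then 1 else 0 := by
    simp [h, ← hb ⟨r, hr⟩, Finsupp.single_apply, Fin.ext_iff, eq_comm]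
  refine ⟨Algebra.leftMulMatrix b pb.gen, h, ?_, ?_, ?_, ?_⟩
  · rw [Algebra.leftMulMatrix_apply, LinearMap.charpoly_toMatrix,
      ← LinearMap.charpoly_toMatrix _ pb.basis, ← Algebra.leftMulMatrix_apply,
      charpoly_leftMulMatrix]
    exact AdjoinRoot.minpoly_powerBasis_gen_of_monic hf
  · convert Algebra.isSelfAdjoint_leftMulMatrix b (b.coord (Fin.last m)) pb.gen
    ext i j
    simp [LinearMap.toMatrix₂_apply, hb, pow_add, h, hankel]
  · intro r hr
    rw [hcoord r (by omega), if_neg hr.ne]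
  · rw [hcoord m (by omega), if_pos rfl]

theorem splitGram_eq_permMatrix_revPerm (k : Type*) [Field k] (n : ℕ) :
    splitGram k n = Fin.revPerm.permMatrix k := by
  ext i j
  simp only [splitGram, Matrix.of_apply, PEquiv.toMatrix_apply, Equiv.toPEquiv_apply,
    Option.mem_def, Option.some.injEq, Fin.revPerm_apply, Fin.ext_iff, Fin.val_rev]
  have := i.isLt
  have := j.isLt
  congr 1
  apply propext
  omega

theorem Matrix.IsSelfAdjoint.dotProduct_mulVec_mulVec {ι R : Type*} [Fintype ι] [CommRing R]
    {J T : Matrix ι ι R} (hT : J.IsSelfAdjoint T) (v w : ι → R) :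
    T *ᵥ v ⬝ᵥ J *ᵥ w = v ⬝ᵥ J *ᵥ (T *ᵥ w) := by
  rw [← vecMul_transpose, dotProduct_mulVec, vecMul_vecMul, hT, ← dotProduct_mulVec,
    mulVec_mulVec]

theorem exists_self_adjoint_with_charpoly_general {k : Type*} [Field k] (hchar : (2 : k) ≠ 0)
    (n : ℕ)
    (f : k[X]) (hm : f.Monic) (hdeg : f.natDegree = 2 * n + 1) :
    ∃ T : Matrix (Fin (2 * n + 1)) (Fin (2 * n + 1)) k,
      (∀ v w : Fin (2 * n + 1) → k,
        splitBilin (T.mulVec v) w = splitBilin v (T.mulVec w)) ∧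
      Matrix.charpoly T = f := by
  obtain ⟨C, h, hC, hCH, h0, h1⟩ := hm.exists_charpoly_eq_isSelfAdjoint_hankel hdeg
  obtain ⟨P, hP, hPH⟩ :=
    exists_isUnit_transpose_mul_permMatrix_revPerm_mul_eq_hankel hchar.isUnit h0 h1
  have hT : (splitGram k n).IsSelfAdjoint (P * C * P⁻¹) := by
    rw [splitGram_eq_permMatrix_revPerm, Matrix.IsSelfAdjoint, ← isAdjointPair_equiv _ _ _ _ hP,
      hPH]
    exact hCH
  refine ⟨P * C * P⁻¹, hT.dotProduct_mulVec_mulVec, ?_⟩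
  simpa [hC] using charpoly_units_conj hP.unit C

/-- Let `k` be a field of characteristic `≠ 2`, `n ≥ 1`, `W` the split orthogonal space of
dimension `2n+1` over `k`, and `f ∈ k[x]` monic separable of degree `2n+1`.  Then there is
a self-adjoint endomorphism `T` of `W` (`⟨Tv,w⟩ = ⟨v,Tw⟩`) with characteristic polynomial
`f`. -/
theorem exists_self_adjoint_with_charpoly {k : Type*} [Field k] (hchar : (2 : k) ≠ 0)
    (n : ℕ) (hn : 1 ≤ n)
    (f : k[X]) (hm : f.Monic) (hdeg : f.natDegree = 2 * n + 1) (hsep : f.Separable) :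
    ∃ T : Matrix (Fin (2 * n + 1)) (Fin (2 * n + 1)) k,
      (∀ v w : Fin (2 * n + 1) → k,
        splitBilin (T.mulVec v) w = splitBilin v (T.mulVec w)) ∧
      Matrix.charpoly T = f :=
  exists_self_adjoint_with_charpoly_general hchar n f hm hdeg
end

section
/- Let k be a field of characteristic ≠ 2, let n ≥ 1, let W be the split orthogonal space of dimension 2n+1 over k, let g ∈ k[x] be monic of degree n, and suppose f(x) = x·g(x²) is separable. Then there exists a k-linear endomorphism T of W which is skew self-adjoint, i.e. ⟨Tv,w⟩ = −⟨v,Tw⟩ for all v,w ∈ W, and whose characteristic polynomial equals f(x). -/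
open Polynomial

/-! On `A = k[X]/(f)` the substitution `X ↦ -X` is an algebra involution `σ`, since `f` is
odd, and `B(v, w) = (-1)ⁿ λ(v σ(w))`, with `λ` the coefficient of `X²ⁿ`, is a nondegenerate
symmetric form for which multiplication by `X` is skew. The powers `1, …, Xⁿ⁻¹` span an
isotropic subspace orthogonal to `Xⁿ`, and `B(Xⁿ, Xⁿ) = 1`. Completing them by their `B`-dual
vectors, corrected to be isotropic, gives a basis in which `B` has the split Gram matrix. In
that basis multiplication by `X` is skew for the split form, and its characteristic polynomial
is `minpoly X = f`. -/

open LinearMap (BilinForm)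
open Matrix Module

section SplitGram

variable {k : Type*} [Field k] {n : ℕ}

theorem splitGram_apply (a b : Fin (2 * n + 1)) :
    splitGram k n a b = if (a : ℕ) + b = 2 * n then 1 else 0 :=
  rfl

theorem splitGram_comm (a b : Fin (2 * n + 1)) : splitGram k n a b = splitGram k n b a := by
  simp only [splitGram_apply, add_comm]

theorem splitGram_apply_rev (a c : Fin (2 * n + 1)) :
    splitGram k n a c.rev = if a = c then 1 else 0 := by
  rw [splitGram_apply, Fin.val_rev]
  simp only [Fin.ext_iff]
  split_ifs <;> first | rfl | omega

end SplitGram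

namespace LinearMap.BilinForm

variable {k V : Type*} [Field k] [AddCommGroup V] [Module k V] (B : BilinForm k V) {n : ℕ}

theorem linearIndependent_of_apply_eq_splitGram {v : Fin (2 * n + 1) → V}
    (hv : ∀ a b, B (v a) (v b) = splitGram k n a b) : LinearIndependent k v := by
  refine Fintype.linearIndependent_iff.2 fun g hg a => ?_
  simpa [map_sum₂, map_smul₂, hv, splitGram_apply_rev] using
    congrArg (fun x => B x (v a.rev)) hg

/-- For `a > n`, subtracting from `e a` half of its pairings with the `e c`, `c > n`, taken along
their partners `e c.rev`, makes these vectors isotropic without changing how they pair with the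
`e a`, `a ≤ n`. -/
noncomputable def hyperbolicCompletion (e : Fin (2 * n + 1) → V) (a : Fin (2 * n + 1)) : V :=
  if (a : ℕ) ≤ n then e a
  else e a - (2⁻¹ : k) • ∑ c : Fin (2 * n + 1) with n < c.val, B (e a) (e c) • e c.rev

variable {B}

section HyperbolicCompletion

variable {e : Fin (2 * n + 1) → V}
  (he : ∀ a b : Fin (2 * n + 1), (a : ℕ) ≤ n → B (e a) (e b) = splitGram k n a b)
include he

theorem apply_hyperbolicCompletion_of_le {a : Fin (2 * n + 1)} (ha : (a : ℕ) ≤ n)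
    (b : Fin (2 * n + 1)) : B (e a) (B.hyperbolicCompletion e b) = splitGram k n a b := by
  unfold hyperbolicCompletion
  split_ifs with hb
  · exact he a b ha
  have hvanish : ∀ c : Fin (2 * n + 1), n < (c : ℕ) →
      B (e a) (B (e b) (e c) • e c.rev) = 0 := by
    intro c hc
    rw [map_smul, he a _ ha, splitGram_apply_rev, if_neg (by rintro rfl; omega), smul_zero]
  rw [map_sub, map_smul, map_sum,
    Finset.sum_eq_zero fun c hc => hvanish c (Finset.mem_filter.1 hc).2, smul_zero, sub_zero,
    he a b ha]

theorem apply_rev_hyperbolicCompletion {c : Fin (2 * n + 1)} (hc : n ≤ (c : ℕ))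
    (b : Fin (2 * n + 1)) : B (e c.rev) (B.hyperbolicCompletion e b) = if b = c then 1 else 0 := by
  rw [apply_hyperbolicCompletion_of_le he (by rw [Fin.val_rev]; omega), splitGram_comm,
    splitGram_apply_rev]

theorem apply_hyperbolicCompletion (hB : B.IsSymm) (h2 : (2 : k) ≠ 0) (a b : Fin (2 * n + 1)) :
    B (B.hyperbolicCompletion e a) (B.hyperbolicCompletion e b) = splitGram k n a b := by
  by_cases ha : (a : ℕ) ≤ n
  · rw [hyperbolicCompletion, if_pos ha, apply_hyperbolicCompletion_of_le he ha]
  by_cases hb : (b : ℕ) ≤ n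
  · rw [hB.eq, hyperbolicCompletion, if_pos hb, apply_hyperbolicCompletion_of_le he hb,
      splitGram_comm]
  set S := Finset.univ.filter fun c : Fin (2 * n + 1) => n < c.val
  have hmem : ∀ x : Fin (2 * n + 1), ¬ (x : ℕ) ≤ n → x ∈ S :=
    fun x hx => by simp only [S, Finset.mem_filter, Finset.mem_univ, true_and]; omega
  have hS : ∀ c ∈ S, n ≤ (c : ℕ) := fun c hc => (Finset.mem_filter.1 hc).2.le
  have hrev_e : ∀ c ∈ S, B (e a) (e c.rev) = if a = c then 1 else 0 := fun c hc => by
    rw [hB.eq, he _ _ (by rw [Fin.val_rev]; have := hS c hc; omega), splitGram_comm,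
      splitGram_apply_rev]
  have h_e_w : B (e a) (B.hyperbolicCompletion e b) = B (e a) (e b) - 2⁻¹ * B (e b) (e a) := by
    rw [hyperbolicCompletion, if_neg hb, map_sub, map_smul, map_sum,
      Finset.sum_eq_single_of_mem a (hmem a ha) fun c hc hca => by
        rw [map_smul, hrev_e c hc, if_neg (Ne.symm hca), smul_zero],
      map_smul, hrev_e a (hmem a ha), if_pos rfl, smul_eq_mul, smul_eq_mul, mul_one]
  calc B (B.hyperbolicCompletion e a) (B.hyperbolicCompletion e b)
      = B (e a) (B.hyperbolicCompletion e b)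
          - 2⁻¹ * ∑ c ∈ S, B (e a) (e c) * B (e c.rev) (B.hyperbolicCompletion e b) := by
        rw [hyperbolicCompletion, if_neg ha, map_sub₂, map_smul₂, map_sum₂, smul_eq_mul]
        simp only [map_smul₂, smul_eq_mul]
        rfl
    _ = B (e a) (B.hyperbolicCompletion e b) - 2⁻¹ * B (e a) (e b) := by
        rw [Finset.sum_eq_single_of_mem b (hmem b hb) fun c hc hcb => by
            rw [apply_rev_hyperbolicCompletion he (hS c hc), if_neg (Ne.symm hcb), mul_zero],
          apply_rev_hyperbolicCompletion he (by omega), if_pos rfl, mul_one]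
    _ = 0 := by
        rw [h_e_w, hB.eq (e b)]
        linear_combination -B (e a) (e b) * mul_inv_cancel₀ h2
    _ = splitGram k n a b := by rw [splitGram_apply, if_neg (by omega)]

end HyperbolicCompletion

theorem exists_basis_toMatrix_eq_splitGram (hB : B.IsSymm) (h2 : (2 : k) ≠ 0)
    (hV : Module.finrank k V = 2 * n + 1) {e : Fin (2 * n + 1) → V}
    (he : ∀ a b : Fin (2 * n + 1), (a : ℕ) ≤ n → B (e a) (e b) = splitGram k n a b) :
    ∃ w : Basis (Fin (2 * n + 1)) k V, BilinForm.toMatrix w B = splitGram k n := by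
  have hw := apply_hyperbolicCompletion he hB h2
  refine ⟨basisOfLinearIndependentOfCardEqFinrank (linearIndependent_of_apply_eq_splitGram B hw)
    (by rw [Fintype.card_fin, hV]), ?_⟩
  ext a b
  rw [toMatrix_apply, coe_basisOfLinearIndependentOfCardEqFinrank, hw]

end LinearMap.BilinForm

theorem LinearMap.IsSkewAdjoint.toMatrix_mulVec_dotProduct {k V ι : Type*} [Field k]
    [AddCommGroup V] [Module k V] [Fintype ι] [DecidableEq ι] {B : LinearMap.BilinForm k V}
    {φ : V →ₗ[k] V} (hφ : B.IsSkewAdjoint φ) (b : Basis ι k V) (x y : ι → k) :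
    (LinearMap.toMatrix b b φ *ᵥ x) ⬝ᵥ BilinForm.toMatrix b B *ᵥ y
      = -(x ⬝ᵥ BilinForm.toMatrix b B *ᵥ (LinearMap.toMatrix b b φ *ᵥ y)) := by
  obtain ⟨v, rfl⟩ := b.equivFun.surjective x
  obtain ⟨w, rfl⟩ := b.equivFun.surjective y
  simp only [Basis.equivFun_apply, LinearMap.toMatrix_mulVec_repr,
    ← BilinForm.apply_eq_dotProduct_toMatrix_mulVec]
  rw [hφ v w, Pi.neg_apply, map_neg]

namespace AdjoinRoot

variable {k : Type*} [Field k] {f : k[X]}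

section NegRoot

noncomputable def negRootHom (hf : f.comp (-X) = -f) : AdjoinRoot f →ₐ[k] AdjoinRoot f :=
  liftAlgHom f (Algebra.ofId k _) (-root f) <| by
    change aeval (-root f) f = 0
    rw [show -root f = aeval (root f) (-X : k[X]) by simp, ← aeval_comp, hf,
      map_neg, aeval_eq, mk_self, neg_zero]

variable (hf : f.comp (-X) = -f)

@[simp]
theorem negRootHom_root : negRootHom hf (root f) = -root f :=
  liftAlgHom_root _ _ _ _

@[simp]
theorem negRootHom_negRootHom (v : AdjoinRoot f) : negRootHom hf (negRootHom hf v) = v := by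
  suffices (negRootHom hf).comp (negRootHom hf) = AlgHom.id k _ from AlgHom.congr_fun this v
  exact algHom_ext (by simp)

end NegRoot

theorem charpoly_leftMulMatrix_root {ι : Type*} [Fintype ι] [DecidableEq ι] (hm : f.Monic)
    (b : Basis ι k (AdjoinRoot f)) : (Algebra.leftMulMatrix b (root f)).charpoly = f := by
  have := hm.finite_adjoinRoot
  have := hm.free_adjoinRoot
  rw [Algebra.leftMulMatrix_apply, LinearMap.charpoly_toMatrix,
    ← LinearMap.charpoly_toMatrix _ (powerBasis' hm).basis, ← Algebra.leftMulMatrix_apply,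
    ← powerBasis'_gen hm, charpoly_leftMulMatrix, powerBasis'_gen, minpoly_root hm.ne_zero,
    hm.leadingCoeff, inv_one, map_one, mul_one]

variable (hm : f.Monic) (n : ℕ)

noncomputable def topCoeff : AdjoinRoot f →ₗ[k] k :=
  lcoeff k (2 * n) ∘ₗ modByMonicHom hm

/-- The sign normalises `B(Xⁿ, Xⁿ)` to `1`. -/
noncomputable def negRootForm (hf : f.comp (-X) = -f) : BilinForm k (AdjoinRoot f) :=
  (-1 : k) ^ n •
    ((LinearMap.mul k (AdjoinRoot f)).compl₂ (negRootHom hf).toLinearMap).compr₂ (topCoeff hm n)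

variable {hm n} {hf : f.comp (-X) = -f}

theorem negRootForm_apply (v w : AdjoinRoot f) :
    negRootForm hm n hf v w = (-1) ^ n * topCoeff hm n (v * negRootHom hf w) :=
  rfl

theorem negRootForm_isSkewAdjoint_lmul_root :
    (negRootForm hm n hf).IsSkewAdjoint (Algebra.lmul k (AdjoinRoot f) (root f)) := fun v w => by
  simp only [Pi.neg_apply, Algebra.coe_lmul_eq_mul, LinearMap.mul_apply', negRootForm_apply,
    map_neg, map_mul, negRootHom_root]
  rw [show v * (-root f * negRootHom hf w) = -(root f * v * negRootHom hf w) by ring, map_neg,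
    mul_neg, neg_neg]

variable (hdeg : f.natDegree = 2 * n + 1)
include hdeg

theorem topCoeff_mk {p : k[X]} (hp : p.natDegree ≤ 2 * n) :
    topCoeff hm n (mk f p) = p.coeff (2 * n) := by
  rw [topCoeff, LinearMap.comp_apply, modByMonicHom_mk, lcoeff_apply,
    (modByMonic_eq_self_iff hm).2]
  rw [degree_eq_natDegree hm.ne_zero, hdeg]
  exact degree_le_natDegree.trans_lt (by exact_mod_cast Nat.lt_succ_of_le hp)

theorem topCoeff_root_pow {m : ℕ} (hm2n : m ≤ 2 * n) :
    topCoeff hm n (root f ^ m) = if m = 2 * n then 1 else 0 := by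
  rw [← mk_X, ← map_pow, topCoeff_mk hdeg (by simpa using hm2n), coeff_X_pow]
  exact if_congr eq_comm rfl rfl

theorem topCoeff_negRootHom (v : AdjoinRoot f) :
    topCoeff hm n (negRootHom hf v) = topCoeff hm n v := by
  suffices topCoeff hm n ∘ₗ (negRootHom hf).toLinearMap = topCoeff hm n from
    LinearMap.congr_fun this v
  refine (powerBasis' hm).basis.ext fun i => ?_
  have hi : (i : ℕ) ≤ 2 * n := by have : (i : ℕ) < f.natDegree := i.isLt; omega
  rw [LinearMap.comp_apply, AlgHom.toLinearMap_apply, PowerBasis.coe_basis, powerBasis'_gen,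
    map_pow, negRootHom_root]
  rcases Nat.even_or_odd i with he | ho
  · rw [he.neg_pow]
  · rw [ho.neg_pow, map_neg, topCoeff_root_pow hdeg hi,
      if_neg fun h : (i : ℕ) = 2 * n => Nat.not_even_iff_odd.2 ho (h ▸ even_two_mul n),
      neg_zero]

theorem negRootForm_isSymm : (negRootForm hm n hf).IsSymm := ⟨fun v w => by
  rw [negRootForm_apply, negRootForm_apply, ← topCoeff_negRootHom (hf := hf) hdeg, map_mul,
    negRootHom_negRootHom, mul_comm (negRootHom hf v)]⟩

theorem negRootForm_root_pow {a b : ℕ} (ha : a ≤ n) (hb : b ≤ n) :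
    negRootForm hm n hf (root f ^ a) (root f ^ b) = if a + b = 2 * n then 1 else 0 := by
  have hsign : root f ^ a * (-root f) ^ b = (-1 : k) ^ b • root f ^ (a + b) := by
    rw [neg_pow, Algebra.smul_def, map_pow, map_neg, map_one, pow_add]
    ring
  rw [negRootForm_apply, map_pow, negRootHom_root, hsign, map_smul,
    topCoeff_root_pow hdeg (by omega), smul_eq_mul]
  split_ifs with h
  · rw [mul_one, ← pow_add, show n + b = 2 * n by omega, Even.neg_one_pow ⟨n, by ring⟩]
  · rw [mul_zero, mul_zero]

theorem negRootForm_nondegenerate : (negRootForm hm n hf).Nondegenerate := by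
  refine (negRootForm_isSymm hdeg).isRefl.nondegenerate_iff_separatingLeft.2 fun v hv => ?_
  obtain ⟨r, rfl⟩ := mk_surjective v
  have hf1 : f ≠ 1 := by rintro rfl; simp at hdeg
  rw [← mk_leftInverse hm (mk f r), modByMonicHom_mk] at hv ⊢
  have hpdeg := natDegree_modByMonic_lt r hm hf1
  generalize r %ₘ f = p at hv hpdeg ⊢
  suffices p = 0 by rw [this, map_zero]
  by_contra hp0
  have hlead := hv (negRootHom hf (root f ^ (2 * n - p.natDegree)))
  rw [negRootForm_apply, negRootHom_negRootHom, ← mk_X, ← map_pow, ← map_mul,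
    topCoeff_mk hdeg (by rw [natDegree_mul_X_pow _ hp0]; omega)] at hlead
  have htop := coeff_mul_X_pow p (2 * n - p.natDegree) p.natDegree
  rw [show p.natDegree + (2 * n - p.natDegree) = 2 * n by omega] at htop
  rw [htop] at hlead
  exact mul_ne_zero (pow_ne_zero _ (neg_ne_zero.2 one_ne_zero)) (leadingCoeff_ne_zero.2 hp0) hlead

theorem exists_basis_toMatrix_negRootForm_eq_splitGram (h2 : (2 : k) ≠ 0) :
    ∃ w : Basis (Fin (2 * n + 1)) k (AdjoinRoot f),
      LinearMap.BilinForm.toMatrix w (negRootForm hm n hf) = splitGram k n := by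
  have hB := negRootForm_isSymm (hm := hm) (hf := hf) hdeg
  let b : Basis (Fin (2 * n + 1)) k (AdjoinRoot f) :=
    (powerBasis' hm).basis.reindex (finCongr hdeg)
  have hb : ∀ i, b i = root f ^ (i : ℕ) := fun i => by
    rw [Basis.reindex_apply, PowerBasis.coe_basis]; rfl
  let d := (negRootForm hm n hf).dualBasis (negRootForm_nondegenerate hdeg) b
  refine LinearMap.BilinForm.exists_basis_toMatrix_eq_splitGram
    (e := fun a => if (a : ℕ) ≤ n then b a else d a.rev) hB h2 ?_ fun a c ha => ?_
  · rw [(powerBasis' hm).finrank, powerBasis'_dim, hdeg]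
  simp only [if_pos ha]
  split_ifs with hc
  · rw [hb, hb, negRootForm_root_pow hdeg ha hc, splitGram_apply]
  · rw [LinearMap.BilinForm.apply_dualBasis_right _ hB, ← splitGram_apply_rev, Fin.rev_rev]

end AdjoinRoot

theorem exists_skew_self_adjoint_with_charpoly_general {k : Type*} [Field k] (hchar : (2 : k) ≠ 0)
    (n : ℕ)
    (g : k[X]) (hg : g.Monic) (hgdeg : g.natDegree = n)
    (f : k[X]) (hf : f = X * g.comp (X ^ 2)) :
    ∃ T : Matrix (Fin (2 * n + 1)) (Fin (2 * n + 1)) k,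
      (∀ v w : Fin (2 * n + 1) → k,
        splitBilin (T.mulVec v) w = - splitBilin v (T.mulVec w)) ∧
      Matrix.charpoly T = f := by
  have hg2 : (g.comp (X ^ 2)).Monic :=
    hg.comp (monic_X_pow 2) (by rw [natDegree_X_pow]; norm_num)
  have hm : f.Monic := by rw [hf]; exact monic_X.mul hg2
  have hdeg : f.natDegree = 2 * n + 1 := by
    rw [hf, natDegree_mul X_ne_zero hg2.ne_zero, natDegree_X, natDegree_comp, hgdeg,
      natDegree_X_pow]
    ring
  have hodd : f.comp (-X) = -f := by
    rw [hf, mul_comp, X_comp, comp_assoc, X_pow_comp, neg_sq, neg_mul]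
  obtain ⟨w, hw⟩ :=
    AdjoinRoot.exists_basis_toMatrix_negRootForm_eq_splitGram (hm := hm) (hf := hodd) hdeg hchar
  refine ⟨Algebra.leftMulMatrix w (AdjoinRoot.root f), fun x y => ?_,
    AdjoinRoot.charpoly_leftMulMatrix_root hm w⟩
  have hskew := (AdjoinRoot.negRootForm_isSkewAdjoint_lmul_root (hm := hm) (n := n)
    (hf := hodd)).toMatrix_mulVec_dotProduct w x y
  rw [hw, ← Algebra.leftMulMatrix_apply] at hskew
  exact hskew

/-- Let `k` be a field of characteristic `≠ 2`, `n ≥ 1`, `W` the split orthogonal space of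
dimension `2n+1` over `k`, `g ∈ k[x]` monic of degree `n`, and suppose `f(x) = x·g(x²)` is
separable.  Then there is a skew self-adjoint endomorphism `T` of `W`
(`⟨Tv,w⟩ = -⟨v,Tw⟩`) with characteristic polynomial `f`. -/
theorem exists_skew_self_adjoint_with_charpoly {k : Type*} [Field k] (hchar : (2 : k) ≠ 0)
    (n : ℕ) (hn : 1 ≤ n)
    (g : k[X]) (hg : g.Monic) (hgdeg : g.natDegree = n)
    (f : k[X]) (hf : f = X * g.comp (X ^ 2)) (hsep : f.Separable) :
    ∃ T : Matrix (Fin (2 * n + 1)) (Fin (2 * n + 1)) k,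
      (∀ v w : Fin (2 * n + 1) → k,
        splitBilin (T.mulVec v) w = - splitBilin v (T.mulVec w)) ∧
      Matrix.charpoly T = f :=
  exists_skew_self_adjoint_with_charpoly_general hchar n g hg hgdeg f hf
end

section
/- Let k be an algebraically closed field of characteristic ≠ 2, let V be a k-vector space of dimension 2n+1 with a nondegenerate symmetric bilinear form B, and let S, T : V → V be two endomorphisms that are both self-adjoint with respect to B (B(Tv,w) = B(v,Tw) and B(Sv,w) = B(v,Sw) for all v,w). If S and T have the same characteristic polynomial and this polynomial is separable, then there exists g ∈ GL(V) with det(g) = 1 and B(gv,gw) = B(v,w) for all v,w ∈ V, such that S = g T g⁻¹. -/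
/-!
Eigenvectors of a `B`-self-adjoint operator for distinct eigenvalues are `B`-orthogonal, so a
separable characteristic polynomial yields an orthogonal eigenbasis; nondegeneracy makes its
vectors non-isotropic, and square roots in `k` normalise it to an orthonormal one. Sending an
orthonormal eigenbasis of `T` to one of `S` with the same eigenvalues is an isometry conjugating
`T` to `S`. Its determinant squares to `1`, and if it is `-1`, negating one target vector
(still an orthonormal eigenvector) turns it into `1`.
-/

open Polynomial Module
open LinearMap (BilinForm)

namespace Module.End

variable {k V ι : Type*} [Field k] [AddCommGroup V] [Module k V] [Fintype ι]

theorem exists_basis_apply_eq_smul [FiniteDimensional k V] (T : End k V) {μ : ι → k}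
    (hμ : Function.Injective μ) (heig : ∀ i, T.HasEigenvalue (μ i))
    (hcard : Fintype.card ι = finrank k V) :
    ∃ b : Basis ι k V, ∀ i, T (b i) = μ i • b i := by
  choose u hu using fun i => (heig i).exists_hasEigenvector
  refine ⟨basisOfLinearIndependentOfCardEqFinrank' u
    (T.eigenvectors_linearIndependent' μ hμ u hu) hcard, fun i => ?_⟩
  simpa using (hu i).apply_eq_smul

end Module.End

namespace LinearMap.BilinForm

variable {k V ι : Type*} [Field k] [AddCommGroup V] [Module k V]

theorem apply_eq_zero_of_isSelfAdjoint {B : BilinForm k V} {T : End k V}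
    (hT : B.IsSelfAdjoint T) {a b : k} {x y : V} (hx : T x = a • x) (hy : T y = b • y)
    (hab : a ≠ b) : B x y = 0 := by
  have h : a * B x y = b * B x y := by simpa [hx, hy] using hT x y
  exact (mul_eq_mul_right_iff.mp h).resolve_left hab

theorem apply_unitsSMul_apply_unitsSMul (B : BilinForm k V) (b : Basis ι k V) (ε : ι → kˣ)
    (i j : ι) :
    B (b.unitsSMul ε i) (b.unitsSMul ε j) = ε i * ε j * B (b i) (b j) := by
  simp only [Basis.unitsSMul_apply, Units.smul_def, map_smul, smul_apply, smul_eq_mul]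
  ring

variable [Fintype ι] [DecidableEq ι]

theorem det_sq_eq_one_of_toMatrix_eq_one {B : BilinForm k V} {w v : Basis ι k V}
    (hw : toMatrix w B = 1) (hv : toMatrix v B = 1) : w.det v ^ 2 = 1 := by
  have h := toMatrix_mul_basis_toMatrix w v B
  rw [hw, hv, Matrix.mul_one] at h
  simpa [Basis.det_apply, sq] using congr_arg Matrix.det h

theorem apply_basisEquiv_apply_basisEquiv {B : BilinForm k V} {w v : Basis ι k V}
    (h : toMatrix w B = toMatrix v B) (x y : V) :
    B (w.equiv v (Equiv.refl ι) x) (w.equiv v (Equiv.refl ι) y) = B x y := by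
  have hcomp : B.comp (w.equiv v (Equiv.refl ι)).toLinearMap (w.equiv v (Equiv.refl ι)) = B := by
    apply (toMatrix w).injective
    rw [toMatrix_comp v w, toMatrix_basis_equiv, h]
    simp
  exact congr($hcomp x y)

structure IsOrthonormalEigenbasis (B : BilinForm k V) (T : End k V) (μ : ι → k)
    (b : Basis ι k V) : Prop where
  apply_eq_smul : ∀ i, T (b i) = μ i • b i
  toMatrix_eq_one : toMatrix b B = 1

theorem exists_isOrthonormalEigenbasis [IsAlgClosed k] [FiniteDimensional k V]
    {B : BilinForm k V} (hB : B.SeparatingLeft) {T : End k V} (hT : B.IsSelfAdjoint T)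
    {μ : ι → k} (hμ : Function.Injective μ) (heig : ∀ i, T.HasEigenvalue (μ i))
    (hcard : Fintype.card ι = finrank k V) :
    ∃ b : Basis ι k V, B.IsOrthonormalEigenbasis T μ b := by
  obtain ⟨b, hb⟩ := T.exists_basis_apply_eq_smul hμ heig hcard
  have horth : ∀ i j, i ≠ j → B (b i) (b j) = 0 := fun i j hij =>
    apply_eq_zero_of_isSelfAdjoint hT (hb i) (hb j) (hμ.ne hij)
  have hdiag : ∀ i, B (b i) (b i) ≠ 0 := by
    intro i hi
    refine b.ne_zero i (hB _ fun y => ?_)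
    suffices B (b i) = 0 by simp [this]
    refine b.ext fun j => ?_
    obtain rfl | hij := eq_or_ne i j
    · simpa using hi
    · simpa using horth i j hij
  choose c hc using fun i => IsAlgClosed.exists_pow_nat_eq (B (b i) (b i))⁻¹ two_pos
  have hc0 : ∀ i, c i ≠ 0 := fun i h => hdiag i (by simpa [h] using (hc i).symm)
  refine ⟨b.unitsSMul fun i => Units.mk0 (c i) (hc0 i), fun i => ?_, ?_⟩
  · rw [Basis.unitsSMul_apply, Units.smul_def, map_smul, hb i, smul_comm]
  · ext i j
    rw [toMatrix_apply, apply_unitsSMul_apply_unitsSMul]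
    obtain rfl | hij := eq_or_ne i j
    · simp [← sq, hc i, hdiag i]
    · simp [horth i j hij, hij]

theorem IsOrthonormalEigenbasis.unitsSMul {B : BilinForm k V} {T : End k V} {μ : ι → k}
    {b : Basis ι k V} (hb : B.IsOrthonormalEigenbasis T μ b) {ε : ι → kˣ}
    (hε : ∀ i, (ε i : k) ^ 2 = 1) : B.IsOrthonormalEigenbasis T μ (b.unitsSMul ε) := by
  refine ⟨fun i => ?_, ?_⟩
  · rw [Basis.unitsSMul_apply, Units.smul_def, map_smul, hb.apply_eq_smul i, smul_comm]
  · ext i j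
    have hij := congr($(hb.toMatrix_eq_one) i j)
    rw [toMatrix_apply] at hij
    rw [toMatrix_apply, apply_unitsSMul_apply_unitsSMul, hij]
    obtain rfl | hij := eq_or_ne i j
    · simp [← sq, hε i]
    · simp [hij]

/-- Flipping the sign of one vector of `v` if necessary gives `v` the orientation of `w`. -/
theorem IsOrthonormalEigenbasis.exists_det_eq_one {B : BilinForm k V} {T S : End k V}
    {μ : ι → k} {w v : Basis ι k V} (hw : B.IsOrthonormalEigenbasis T μ w)
    (hv : B.IsOrthonormalEigenbasis S μ v) :
    ∃ v' : Basis ι k V, B.IsOrthonormalEigenbasis S μ v' ∧ w.det v' = 1 := by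
  by_cases hdet : w.det v = 1
  · exact ⟨v, hv, hdet⟩
  have hneg : w.det v = -1 :=
    (sq_eq_one_iff.mp (det_sq_eq_one_of_toMatrix_eq_one hw.toMatrix_eq_one
      hv.toMatrix_eq_one)).resolve_left hdet
  obtain hι | ⟨⟨i₀⟩⟩ := isEmpty_or_nonempty ι
  · simp at hdet
  let ε : ι → kˣ := fun i => if i = i₀ then -1 else 1
  have hε : ∀ i, (ε i : k) ^ 2 = 1 := fun i => by by_cases h : i = i₀ <;> simp [ε, h]
  refine ⟨v.unitsSMul ε, hv.unitsSMul hε, ?_⟩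
  rw [← w.det_mul_det v, Basis.det_unitsSMul_self, hneg]
  simp [ε, apply_ite Units.val, Finset.prod_ite_eq']

end LinearMap.BilinForm

theorem self_adjoint_conjugate_over_alg_closed_general {k V : Type*} [Field k] [IsAlgClosed k]
    [AddCommGroup V] [Module k V] [FiniteDimensional k V]
    (B : LinearMap.BilinForm k V)
    (hnd : ∀ v : V, (∀ w : V, B v w = 0) → v = 0)
    (S T : V →ₗ[k] V)
    (hS : ∀ v w : V, B (S v) w = B v (S w))
    (hT : ∀ v w : V, B (T v) w = B v (T w))
    (hchareq : LinearMap.charpoly S = LinearMap.charpoly T)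
    (hsep : (LinearMap.charpoly T).Separable) :
    ∃ g : V ≃ₗ[k] V, LinearMap.det g.toLinearMap = 1 ∧
      (∀ v w : V, B (g v) (g w) = B v w) ∧
      ∀ v : V, S v = g (T (g.symm v)) := by
  classical
  let Λ := T.charpoly.roots.toFinset
  have hcard : Fintype.card Λ = finrank k V := by
    rw [Fintype.card_coe, Multiset.toFinset_card_of_nodup (nodup_roots hsep),
      splits_iff_card_roots.mp (IsAlgClosed.splits _), LinearMap.charpoly_natDegree]
  have heig : ∀ U : End k V, U.charpoly = T.charpoly → ∀ μ : Λ, U.HasEigenvalue μ :=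
    fun U hU μ => by
      rw [End.hasEigenvalue_iff_isRoot_charpoly, hU]
      exact isRoot_of_mem_roots (Multiset.mem_toFinset.mp μ.2)
  obtain ⟨w, hw⟩ := LinearMap.BilinForm.exists_isOrthonormalEigenbasis hnd hT
    Subtype.val_injective (heig T rfl) hcard
  obtain ⟨v, hv⟩ := LinearMap.BilinForm.exists_isOrthonormalEigenbasis hnd hS
    Subtype.val_injective (heig S hchareq) hcard
  obtain ⟨v', hv', hdet⟩ := hw.exists_det_eq_one hv
  let g := w.equiv v' (Equiv.refl _)
  have hST : S ∘ₗ g = g ∘ₗ T := w.ext fun i => by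
    simp [g, hw.apply_eq_smul i, hv'.apply_eq_smul i]
  refine ⟨g, by rw [Basis.det_basis, hdet], LinearMap.BilinForm.apply_basisEquiv_apply_basisEquiv
    (hw.toMatrix_eq_one.trans hv'.toMatrix_eq_one.symm), fun x => ?_⟩
  simpa using congr($hST (g.symm x))

/-- Let `k` be an algebraically closed field of characteristic `≠ 2`, `V` a `k`-vector
space of dimension `2n+1` with a nondegenerate symmetric bilinear form `B`, and `S, T` two
`B`-self-adjoint endomorphisms of `V`.  If `S` and `T` have the same characteristic
polynomial and it is separable, then `S = g T g⁻¹` for some `g` preserving `B` with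
`det g = 1`. -/
theorem self_adjoint_conjugate_over_alg_closed {k V : Type*} [Field k] [IsAlgClosed k]
    (hchar : (2 : k) ≠ 0) [AddCommGroup V] [Module k V] [FiniteDimensional k V]
    (n : ℕ) (hn : 1 ≤ n) (hdim : Module.finrank k V = 2 * n + 1)
    (B : LinearMap.BilinForm k V) (hsymm : ∀ v w : V, B v w = B w v)
    (hnd : ∀ v : V, (∀ w : V, B v w = 0) → v = 0)
    (S T : V →ₗ[k] V)
    (hS : ∀ v w : V, B (S v) w = B v (S w))
    (hT : ∀ v w : V, B (T v) w = B v (T w))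
    (hchareq : LinearMap.charpoly S = LinearMap.charpoly T)
    (hsep : (LinearMap.charpoly T).Separable) :
    ∃ g : V ≃ₗ[k] V, LinearMap.det g.toLinearMap = 1 ∧
      (∀ v w : V, B (g v) (g w) = B v w) ∧
      ∀ v : V, S v = g (T (g.symm v)) :=
  self_adjoint_conjugate_over_alg_closed_general B hnd S T hS hT hchareq hsep
end

section
/- Let k be an algebraically closed field of characteristic ≠ 2, let V be a k-vector space of dimension 2n+1 with a nondegenerate symmetric bilinear form B, and let S, T : V → V be two endomorphisms that are both skew self-adjoint with respect to B (B(Tv,w) = −B(v,Tw) and B(Sv,w) = −B(v,Sw) for all v,w). If S and T have the same characteristic polynomial and this polynomial is separable, then there exists g ∈ GL(V) with det(g) = 1 and B(gv,gw) = B(v,w) for all v,w ∈ V, such that S = g T g⁻¹. -/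
/-!
Both `S` and `T` are diagonalizable with the same simple eigenvalues, so matching eigenvectors
gives some `h` with `S = h T h⁻¹`; the task is to make `h` an isometry of determinant one.
Skewness makes eigenvectors orthogonal unless their eigenvalues sum to zero, so for each
eigenvalue `μ` the Gram row of the `S`-eigenvector `s μ` is a nonzero multiple `a μ` of that of
the `T`-eigenvector `t μ`, and symmetry of `B` gives `a μ = a ν` whenever `B (t μ) (t ν) ≠ 0`.
Rescaling `s μ` by `(√(a μ))⁻¹` makes the two Gram matrices equal, so `t μ ↦ s μ` becomes an
isometry, of determinant `±1`. In odd dimension a skew map has determinant zero, so `0` is an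
eigenvalue, and its eigenvector is orthogonal to all the others: negating it fixes the sign.
-/

open Module

theorem exists_ne_zero_eq_smul_of_support_subsingleton {ι K : Type*} [Field K] {x y : ι → K}
    (hx : x ≠ 0) (hy : y ≠ 0) (h : (Function.support x ∪ Function.support y).Subsingleton) :
    ∃ a : K, a ≠ 0 ∧ y = a • x := by
  obtain ⟨i, hi⟩ := Function.ne_iff.mp hx
  obtain ⟨j, hj⟩ := Function.ne_iff.mp hy
  obtain rfl : j = i := h (Or.inr hj) (Or.inl hi)
  refine ⟨y j / x j, div_ne_zero hj hi, funext fun m ↦ ?_⟩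
  rcases eq_or_ne m j with rfl | hm
  · simp [div_mul_cancel₀ _ (show x m ≠ 0 from hi)]
  · have hxm : x m = 0 := by_contra fun h' ↦ hm (h (Or.inl h') (Or.inl hi))
    have hym : y m = 0 := by_contra fun h' ↦ hm (h (Or.inr h') (Or.inl hi))
    simp [hxm, hym]

section CommRing

variable {R M ι : Type*} [CommRing R] [AddCommGroup M] [Module R M] {B : LinearMap.BilinForm R M}

theorem LinearMap.SeparatingLeft.apply_basis_ne_zero (hB : B.SeparatingLeft)
    (b : Basis ι R M) {v : M} (hv : v ≠ 0) : (fun i ↦ B v (b i)) ≠ 0 := by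
  intro h
  have hBv : B v = 0 := b.ext fun i ↦ congrFun h i
  exact hv (hB v fun w ↦ by rw [hBv, LinearMap.zero_apply])

theorem Module.Basis.equiv_conj_of_eigen {S T : M →ₗ[R] M} (t u : Basis ι R M) (μ : ι → R)
    (ht : ∀ i, T (t i) = μ i • t i) (hu : ∀ i, S (u i) = μ i • u i) (v : M) :
    S v = t.equiv u (Equiv.refl ι) (T ((t.equiv u (Equiv.refl ι)).symm v)) := by
  set g := t.equiv u (Equiv.refl ι)
  have hcomm : S ∘ₗ g.toLinearMap = g.toLinearMap ∘ₗ T := t.ext fun i ↦ by simp [g, ht, hu]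
  simpa using LinearMap.congr_fun hcomm (g.symm v)

theorem Module.Basis.equiv_isometry_of_gram_eq (t u : Basis ι R M)
    (h : ∀ i j, B (u i) (u j) = B (t i) (t j)) (v w : M) :
    B (t.equiv u (Equiv.refl ι) v) (t.equiv u (Equiv.refl ι) w) = B v w := by
  have : B.compl₁₂ (t.equiv u (Equiv.refl ι)).toLinearMap (t.equiv u (Equiv.refl ι)).toLinearMap
      = B :=
    LinearMap.BilinForm.ext_basis t fun i j ↦ by simp [h]
  exact LinearMap.congr_fun₂ this v w

end CommRing

section Field

variable {k V : Type*} [Field k] [AddCommGroup V] [Module k V]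

theorem Module.End.mem_roots_charpoly_iff [FiniteDimensional k V] (f : End k V) (μ : k) :
    μ ∈ f.charpoly.roots ↔ f.HasEigenvalue μ := by
  rw [Polynomial.mem_roots f.charpoly_monic.ne_zero, hasEigenvalue_iff_isRoot_charpoly]

theorem Module.End.card_roots_toFinset_charpoly [FiniteDimensional k V] [IsAlgClosed k]
    [DecidableEq k] {f : End k V} (hsep : f.charpoly.Separable) :
    f.charpoly.roots.toFinset.card = finrank k V := by
  rw [Multiset.toFinset_card_of_nodup (Polynomial.nodup_roots hsep),
    ← (IsAlgClosed.splits _).natDegree_eq_card_roots, LinearMap.charpoly_natDegree]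

theorem Module.End.exists_basis_eigenvectors [FiniteDimensional k V] (f : End k V) {Λ : Finset k}
    (hΛ : ∀ μ ∈ Λ, f.HasEigenvalue μ) (hcard : Λ.card = finrank k V) :
    ∃ b : Basis Λ k V, ∀ μ : Λ, f (b μ) = (μ : k) • b μ := by
  choose v hv using fun μ : Λ ↦ (hΛ μ μ.2).exists_hasEigenvector
  refine ⟨basisOfLinearIndependentOfCardEqFinrank' v
    (f.eigenvectors_linearIndependent' _ Subtype.coe_injective v hv) (by simpa using hcard),
    fun μ ↦ ?_⟩
  simpa using (hv μ).apply_eq_smul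

variable {B : LinearMap.BilinForm k V}

theorem LinearMap.det_eq_zero_of_skew [FiniteDimensional k V] (hchar : (2 : k) ≠ 0)
    (hodd : Odd (finrank k V)) (hB : B.Nondegenerate) {T : V →ₗ[k] V}
    (hT : ∀ v w, B (T v) w = -B v (T w)) : LinearMap.det T = 0 := by
  set φ := B.toDual hB
  have hdual : T.dualMap = φ.toLinearMap ∘ₗ (-T) ∘ₗ φ.symm.toLinearMap := by
    ext f w
    obtain ⟨v, rfl⟩ := φ.surjective f
    simp [φ, LinearMap.BilinForm.toDual_def, hT]
  have hdet : LinearMap.det T = -LinearMap.det T := by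
    conv_lhs => rw [← LinearMap.det_dualMap, hdual, LinearMap.det_conj, ← neg_one_smul k T,
      LinearMap.det_smul, hodd.neg_one_pow]
    ring
  exact (mul_eq_zero.mp (by linear_combination hdet : (2 : k) * LinearMap.det T = 0)).resolve_left
    hchar

theorem apply_eq_zero_of_skew_of_eigen {T : V →ₗ[k] V} (hT : ∀ v w, B (T v) w = -B v (T w))
    {v w : V} {l m : k} (hv : T v = l • v) (hw : T w = m • w) (hlm : l + m ≠ 0) :
    B v w = 0 := by
  have h := hT v w
  rw [hv, hw, map_smul, map_smul] at h
  simp only [LinearMap.smul_apply, smul_eq_mul] at h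
  exact (mul_eq_zero.mp (by linear_combination h : (l + m) * B v w = 0)).resolve_left hlm

theorem exists_gram_eq_smul_of_skew {ι : Type*} (hB : B.SeparatingLeft) {S T : V →ₗ[k] V}
    (hS : ∀ v w, B (S v) w = -B v (S w)) (hT : ∀ v w, B (T v) w = -B v (T w))
    {μ : ι → k} (hμ : Function.Injective μ) {s t : Basis ι k V}
    (hs : ∀ i, S (s i) = μ i • s i) (ht : ∀ i, T (t i) = μ i • t i) :
    ∃ a : ι → k, (∀ i, a i ≠ 0) ∧ ∀ i j, B (s i) (s j) = a i * B (t i) (t j) := by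
  suffices ∀ i, ∃ a : k, a ≠ 0 ∧ (fun j ↦ B (s i) (s j)) = a • fun j ↦ B (t i) (t j) by
    choose a ha0 ha using this
    exact ⟨a, ha0, fun i j ↦ congrFun (ha i) j⟩
  intro i
  refine exists_ne_zero_eq_smul_of_support_subsingleton (hB.apply_basis_ne_zero t (t.ne_zero i))
    (hB.apply_basis_ne_zero s (s.ne_zero i)) ?_
  have hsupp : Function.support (fun j ↦ B (t i) (t j)) ∪ Function.support (fun j ↦ B (s i) (s j))
      ⊆ {j | μ i + μ j = 0} := by
    rintro j (hj | hj) <;> by_contra hij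
    · exact hj (apply_eq_zero_of_skew_of_eigen hT (ht i) (ht j) hij)
    · exact hj (apply_eq_zero_of_skew_of_eigen hS (hs i) (hs j) hij)
  refine Set.Subsingleton.anti (fun j (hj : μ i + μ j = 0) j' (hj' : μ i + μ j' = 0) ↦ hμ ?_) hsupp
  linear_combination hj - hj'

theorem exists_smul_gram_eq [IsAlgClosed k] (hsymm : ∀ v w, B v w = B w v) {ι : Type*}
    {s t : ι → V} {a : ι → k} (ha : ∀ i, a i ≠ 0)
    (hst : ∀ i j, B (s i) (s j) = a i * B (t i) (t j)) :
    ∃ w : ι → k, (∀ i, w i ≠ 0) ∧ ∀ i j, B (w i • s i) (w j • s j) = B (t i) (t j) := by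
  -- the square root is taken of the value `a i`, so that equal values get equal roots
  choose r hr using IsAlgClosed.exists_eq_mul_self (k := k)
  have hr0 : ∀ i, r (a i) ≠ 0 := fun i h ↦ ha i (by rw [hr (a i), h, mul_zero])
  refine ⟨fun i ↦ (r (a i))⁻¹, fun i ↦ inv_ne_zero (hr0 i), fun i j ↦ ?_⟩
  simp only [map_smul, LinearMap.smul_apply, smul_eq_mul, hst]
  by_cases hij : B (t i) (t j) = 0
  · simp [hij]
  have haij : a i = a j := mul_right_cancel₀ hij <| by
    rw [← hst, hsymm, hst, hsymm]
  rw [← haij, ← mul_assoc, ← mul_inv, ← hr, inv_mul_cancel_left₀ (ha i)]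

theorem gram_mulSingle_neg_one_smul {ι : Type*} [DecidableEq ι] (hsymm : ∀ v w, B v w = B w v)
    (u : ι → V) (i : ι) (hi : ∀ j ≠ i, B (u i) (u j) = 0) (j l : ι) :
    B ((Pi.mulSingle i (-1) : ι → k) j • u j) ((Pi.mulSingle i (-1) : ι → k) l • u l) =
      B (u j) (u l) := by
  rcases eq_or_ne j i with rfl | hj <;> rcases eq_or_ne l j with rfl | hl
  · simp
  · simp [hl, hi l hl]
  · simp [hj]
  · rcases eq_or_ne l i with rfl | hli
    · simp [hj, hsymm (u j), hi j hj]
    · simp [hj, hli]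

theorem Module.Basis.det_eq_one_or_neg_one_of_gram_eq {ι : Type*} [Fintype ι] [DecidableEq ι]
    (hB : B.Nondegenerate) (t u : Basis ι k V) (h : ∀ i j, B (u i) (u j) = B (t i) (t j)) :
    t.det u = 1 ∨ t.det u = -1 := by
  have hgram : LinearMap.BilinForm.toMatrix u B = LinearMap.BilinForm.toMatrix t B := by
    ext i j
    simp [LinearMap.BilinForm.toMatrix_apply, h]
  have hdet := congrArg Matrix.det (LinearMap.BilinForm.toMatrix_mul_basis_toMatrix t u B)
  rw [hgram, Matrix.det_mul, Matrix.det_mul, Matrix.det_transpose, ← Basis.det_apply] at hdet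
  have hG := (LinearMap.BilinForm.nondegenerate_iff_det_ne_zero t).mp hB
  have : (t.det u - 1) * (t.det u + 1) = 0 :=
    mul_right_cancel₀ hG (by linear_combination hdet)
  rcases mul_eq_zero.mp this with h1 | h1
  · exact Or.inl (sub_eq_zero.mp h1)
  · exact Or.inr (eq_neg_of_add_eq_zero_left h1)

theorem Module.Basis.exists_gram_eq_det_eq_one {ι : Type*} [Fintype ι] [DecidableEq ι]
    (hB : B.Nondegenerate) (hsymm : ∀ v w, B v w = B w v) (t u : Basis ι k V)
    (h : ∀ i j, B (u i) (u j) = B (t i) (t j)) (i : ι) (hi : ∀ j ≠ i, B (u i) (u j) = 0) :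
    ∃ u' : Basis ι k V, (∀ j, ∃ c : k, u' j = c • u j) ∧
      (∀ j l, B (u' j) (u' l) = B (t j) (t l)) ∧ t.det u' = 1 := by
  rcases t.det_eq_one_or_neg_one_of_gram_eq hB u h with hdet | hdet
  · exact ⟨u, fun j ↦ ⟨1, (one_smul k _).symm⟩, h, hdet⟩
  have hε : ∀ j, IsUnit ((Pi.mulSingle i (-1) : ι → k) j) := fun j ↦ by
    rcases eq_or_ne j i with rfl | hj <;> simp [*]
  refine ⟨u.isUnitSMul hε, fun j ↦ ⟨_, u.isUnitSMul_apply hε j⟩, fun j l ↦ ?_, ?_⟩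
  · rw [u.isUnitSMul_apply, u.isUnitSMul_apply, gram_mulSingle_neg_one_smul hsymm u i hi, h]
  · rw [← t.det_mul_det u, hdet, det_isUnitSMul, Finset.prod_pi_mulSingle',
      if_pos (Finset.mem_univ i)]
    norm_num

end Field

theorem skew_self_adjoint_conjugate_over_alg_closed_general {k V : Type*} [Field k] [IsAlgClosed k]
    (hchar : (2 : k) ≠ 0) [AddCommGroup V] [Module k V] [FiniteDimensional k V]
    (n : ℕ) (hdim : Module.finrank k V = 2 * n + 1)
    (B : LinearMap.BilinForm k V) (hsymm : ∀ v w : V, B v w = B w v)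
    (hnd : ∀ v : V, (∀ w : V, B v w = 0) → v = 0)
    (S T : V →ₗ[k] V)
    (hS : ∀ v w : V, B (S v) w = - B v (S w))
    (hT : ∀ v w : V, B (T v) w = - B v (T w))
    (hchareq : LinearMap.charpoly S = LinearMap.charpoly T)
    (hsep : (LinearMap.charpoly T).Separable) :
    ∃ g : V ≃ₗ[k] V, LinearMap.det g.toLinearMap = 1 ∧
      (∀ v w : V, B (g v) (g w) = B v w) ∧
      ∀ v : V, S v = g (T (g.symm v)) := by
  classical
  have hB : B.Nondegenerate := .ofSeparatingLeft hnd
  set Λ := (LinearMap.charpoly T).roots.toFinset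
  have hΛ (f : End k V) (hf : f.charpoly = T.charpoly) (μ : k) (hμ : μ ∈ Λ) :
      f.HasEigenvalue μ := by
    rwa [Multiset.mem_toFinset, ← hf, End.mem_roots_charpoly_iff] at hμ
  have hcard := End.card_roots_toFinset_charpoly hsep
  obtain ⟨t, ht⟩ := End.exists_basis_eigenvectors T (hΛ T rfl) hcard
  obtain ⟨s, hs⟩ := End.exists_basis_eigenvectors S (hΛ S hchareq) hcard
  obtain ⟨a, ha0, hst⟩ := exists_gram_eq_smul_of_skew hnd hS hT Subtype.coe_injective hs ht
  obtain ⟨w, hw0, hw⟩ := exists_smul_gram_eq hsymm ha0 hst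
  set u := s.isUnitSMul fun μ ↦ (hw0 μ).isUnit
  have hu (μ : Λ) : S (u μ) = (μ : k) • u μ := by
    rw [s.isUnitSMul_apply, map_smul, hs, smul_comm]
  have h0 : (0 : k) ∈ Λ := by
    rw [Multiset.mem_toFinset, End.mem_roots_charpoly_iff]
    exact ((LinearMap.hasEigenvalue_zero_tfae T).out 0 3).mpr
      (LinearMap.det_eq_zero_of_skew hchar (hdim ▸ odd_two_mul_add_one n) hB hT)
  obtain ⟨u', hu'u, hgram, hdet⟩ := t.exists_gram_eq_det_eq_one hB hsymm u
    (fun μ ν ↦ by simpa [u, s.isUnitSMul_apply] using hw μ ν) ⟨0, h0⟩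
    fun μ hμ ↦ apply_eq_zero_of_skew_of_eigen hS (hu _) (hu μ) (by simpa [Subtype.ext_iff] using hμ)
  have hu' (μ : Λ) : S (u' μ) = (μ : k) • u' μ := by
    obtain ⟨c, hc⟩ := hu'u μ
    rw [hc, map_smul, hu, smul_comm]
  exact ⟨t.equiv u' (Equiv.refl Λ), by rwa [Basis.det_basis],
    t.equiv_isometry_of_gram_eq u' hgram, t.equiv_conj_of_eigen u' _ ht hu'⟩

/-- Let `k` be an algebraically closed field of characteristic `≠ 2`, `V` a `k`-vector
space of dimension `2n+1` with a nondegenerate symmetric bilinear form `B`, and `S, T` two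
`B`-skew-self-adjoint endomorphisms of `V`.  If `S` and `T` have the same characteristic
polynomial and it is separable, then `S = g T g⁻¹` for some `g` preserving `B` with
`det g = 1`. -/
theorem skew_self_adjoint_conjugate_over_alg_closed {k V : Type*} [Field k] [IsAlgClosed k]
    (hchar : (2 : k) ≠ 0) [AddCommGroup V] [Module k V] [FiniteDimensional k V]
    (n : ℕ) (hn : 1 ≤ n) (hdim : Module.finrank k V = 2 * n + 1)
    (B : LinearMap.BilinForm k V) (hsymm : ∀ v w : V, B v w = B w v)
    (hnd : ∀ v : V, (∀ w : V, B v w = 0) → v = 0)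
    (S T : V →ₗ[k] V)
    (hS : ∀ v w : V, B (S v) w = - B v (S w))
    (hT : ∀ v w : V, B (T v) w = - B v (T w))
    (hchareq : LinearMap.charpoly S = LinearMap.charpoly T)
    (hsep : (LinearMap.charpoly T).Separable) :
    ∃ g : V ≃ₗ[k] V, LinearMap.det g.toLinearMap = 1 ∧
      (∀ v w : V, B (g v) (g w) = B v w) ∧
      ∀ v : V, S v = g (T (g.symm v)) :=
  skew_self_adjoint_conjugate_over_alg_closed_general hchar n hdim B hsymm hnd S T hS hT hchareq
    hsep
end

section
/- Let k be a field of characteristic ≠ 2, n ≥ 1, f ∈ k[x] monic separable of degree 2n+1, L = k[x]/(f) with β the image of x, and let ⟨λ,μ⟩ = c(λμ) be the symmetric bilinear form on L given by the coefficient of β^{2n}. Then a k-linear automorphism g : L → L satisfies both ⟨gλ,gμ⟩ = ⟨λ,μ⟩ for all λ,μ ∈ L and g(βλ) = β·g(λ) for all λ ∈ L if and only if g is multiplication by some λ₀ ∈ L with λ₀² = 1; and for such g the determinant of g equals the norm N_{L/k}(λ₀). -/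
/-!
Writing `β` for the class of `x`, the form `⟨λ, μ⟩ = c (λ μ)` is nondegenerate: its Gram matrix
`c (β ^ (i + j))` on the power basis is anti-triangular with ones on the antidiagonal. A linear map
commuting with multiplication by `β` commutes with all of `L = k[β]`, hence is multiplication by
`λ₀ = g 1`; it preserves the form iff `c ((λ₀² - 1) μ) = 0` for all `μ`, i.e. iff `λ₀² = 1`.
-/

open Polynomial

namespace PowerBasis

variable {R S : Type*} [CommRing R]

theorem eq_zero_of_forall_map_mul_eq_zero [Ring S] [Algebra R S] (pb : PowerBasis R S)
    (c : S →ₗ[R] R) (hc : ∀ i < pb.dim, c (pb.gen ^ i) = if i + 1 = pb.dim then 1 else 0)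
    {a : S} (ha : ∀ ν, c (a * ν) = 0) : a = 0 := by
  by_contra ha0
  set r := pb.basis.repr a
  have hr : r.support.Nonempty := by simpa [r, Finsupp.support_nonempty_iff] using ha0
  set d := r.support.max' hr
  have hd : r d ≠ 0 := Finsupp.mem_support_iff.mp (r.support.max'_mem hr)
  have hbasis : ∀ i ≤ d, c (pb.basis i * pb.gen ^ (pb.dim - 1 - d)) = if i = d then 1 else 0 := by
    intro i hi
    have hi' : (i : ℕ) ≤ d := hi
    rw [pb.basis_eq_pow, ← pow_add, hc _ (by omega)]
    exact if_congr (by omega) rfl rfl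
  have hcoeff : c (a * pb.gen ^ (pb.dim - 1 - d)) = r d := by
    conv_lhs => rw [← pb.basis.sum_repr a]
    rw [Finset.sum_mul, map_sum, Finset.sum_eq_single d]
    · rw [smul_mul_assoc, map_smul, hbasis d le_rfl, if_pos rfl, smul_eq_mul, mul_one]
    · intro i _ hid
      by_cases hri : r i = 0
      · rw [smul_mul_assoc, map_smul, hri, zero_smul]
      · rw [smul_mul_assoc, map_smul,
          hbasis i (r.support.le_max' i (Finsupp.mem_support_iff.mpr hri)), if_neg hid, smul_zero]
    · exact fun h => absurd (Finset.mem_univ d) h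
  exact hd (hcoeff ▸ ha _)

theorem linearMap_eq_mulLeft_of_map_gen_mul [CommRing S] [Algebra R S] (pb : PowerBasis R S)
    (g : S →ₗ[R] S) (hg : ∀ x, g (pb.gen * x) = pb.gen * g x) :
    g = LinearMap.mulLeft R (g 1) := by
  have hpow : ∀ i : ℕ, g (pb.gen ^ i) = g 1 * pb.gen ^ i := by
    intro i
    induction i with
    | zero => simp
    | succ i ih => rw [pow_succ', hg, ih, mul_left_comm]
  exact pb.basis.ext fun i => by simp [pb.basis_eq_pow, hpow]

end PowerBasis

theorem mulLeft_preserves_form_iff_sq_eq_one {R S : Type*} [CommRing R] [CommRing S]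
    [Algebra R S] (c : S →ₗ[R] R) (hc : ∀ a, (∀ ν, c (a * ν) = 0) → a = 0) (a : S) :
    (∀ x y, c (a * x * (a * y)) = c (x * y)) ↔ a ^ 2 = 1 := by
  constructor
  · intro hpres
    refine sub_eq_zero.mp (hc _ fun ν => ?_)
    have hν : (a ^ 2 - 1) * ν = a * ν * (a * 1) - ν * 1 := by ring
    rw [hν, map_sub, hpres, sub_self]
  · intro hsq x y
    rw [show a * x * (a * y) = a ^ 2 * (x * y) by ring, hsq, one_mul]

theorem stabilizer_of_self_adjoint_operator_general {k : Type*} [Field k]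
    (n : ℕ)
    (f : k[X]) (hm : f.Monic) (hdeg : f.natDegree = 2 * n + 1)
    (c : AdjoinRoot f →ₗ[k] k)
    (hc : ∀ i : ℕ, i ≤ 2 * n → c (AdjoinRoot.root f ^ i) = if i = 2 * n then 1 else 0)
    (g : AdjoinRoot f ≃ₗ[k] AdjoinRoot f) :
    (((∀ lam mu : AdjoinRoot f, c (g lam * g mu) = c (lam * mu)) ∧
        (∀ lam : AdjoinRoot f, g (AdjoinRoot.root f * lam) = AdjoinRoot.root f * g lam)) ↔
      ∃ lam₀ : AdjoinRoot f, lam₀ ^ 2 = 1 ∧ ∀ lam : AdjoinRoot f, g lam = lam₀ * lam) ∧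
    (∀ lam₀ : AdjoinRoot f, lam₀ ^ 2 = 1 → (∀ lam : AdjoinRoot f, g lam = lam₀ * lam) →
      LinearMap.det g.toLinearMap = LinearMap.det (LinearMap.mulLeft k lam₀)) := by
  set pb := AdjoinRoot.powerBasis' hm
  have hnondeg : ∀ a : AdjoinRoot f, (∀ ν, c (a * ν) = 0) → a = 0 := fun a =>
    pb.eq_zero_of_forall_map_mul_eq_zero c fun i hi => by
      have hdim : pb.dim = 2 * n + 1 := hdeg
      rw [hdim] at hi ⊢
      exact (hc i (by omega)).trans (if_congr (by omega) rfl rfl)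
  have hpres : ∀ lam₀ : AdjoinRoot f, (∀ lam, g lam = lam₀ * lam) →
      ((∀ lam mu, c (g lam * g mu) = c (lam * mu)) ↔ lam₀ ^ 2 = 1) := fun lam₀ hg => by
    simp only [hg]
    exact mulLeft_preserves_form_iff_sq_eq_one c hnondeg lam₀
  refine ⟨⟨fun ⟨hform, hcomm⟩ => ?_, fun ⟨lam₀, hsq, hg⟩ => ⟨(hpres lam₀ hg).mpr hsq, ?_⟩⟩,
    fun lam₀ _ hg => by rw [show g.toLinearMap = LinearMap.mulLeft k lam₀ from LinearMap.ext hg]⟩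
  · have hg : ∀ lam, g lam = g 1 * lam :=
      LinearMap.congr_fun (pb.linearMap_eq_mulLeft_of_map_gen_mul g.toLinearMap hcomm)
    exact ⟨g 1, (hpres _ hg).mp hform, hg⟩
  · intro lam
    rw [hg, hg, mul_left_comm]

/-- Let `k` be a field of characteristic `≠ 2`, `n ≥ 1`, `f ∈ k[x]` monic separable of
degree `2n+1`, `L = k[x]/(f)` with `β` the image of `x`, and `⟨λ,μ⟩ = c(λμ)` the bilinear
form given by the coefficient of `β^{2n}`.  Then a `k`-linear automorphism `g` of `L`
preserves `⟨·,·⟩` and commutes with multiplication by `β` if and only if `g` is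
multiplication by some `λ₀ ∈ L` with `λ₀² = 1`; and for such `g` the determinant of `g`
equals the norm `N_{L/k}(λ₀)`, i.e. the determinant of multiplication by `λ₀`. -/
theorem stabilizer_of_self_adjoint_operator {k : Type*} [Field k] (hchar : (2 : k) ≠ 0)
    (n : ℕ) (hn : 1 ≤ n)
    (f : k[X]) (hm : f.Monic) (hdeg : f.natDegree = 2 * n + 1) (hsep : f.Separable)
    (c : AdjoinRoot f →ₗ[k] k)
    (hc : ∀ i : ℕ, i ≤ 2 * n → c (AdjoinRoot.root f ^ i) = if i = 2 * n then 1 else 0)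
    (g : AdjoinRoot f ≃ₗ[k] AdjoinRoot f) :
    (((∀ lam mu : AdjoinRoot f, c (g lam * g mu) = c (lam * mu)) ∧
        (∀ lam : AdjoinRoot f, g (AdjoinRoot.root f * lam) = AdjoinRoot.root f * g lam)) ↔
      ∃ lam₀ : AdjoinRoot f, lam₀ ^ 2 = 1 ∧ ∀ lam : AdjoinRoot f, g lam = lam₀ * lam) ∧
    (∀ lam₀ : AdjoinRoot f, lam₀ ^ 2 = 1 → (∀ lam : AdjoinRoot f, g lam = lam₀ * lam) →
      LinearMap.det g.toLinearMap = LinearMap.det (LinearMap.mulLeft k lam₀)) :=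
  stabilizer_of_self_adjoint_operator_general n f hm hdeg c hc g
end

section
/- Let k be a field of characteristic ≠ 2, n ≥ 1, g ∈ k[x] monic of degree n with f(x) = x·g(x²) separable, L = k[x]/(f) with β the image of x, τ the k-algebra automorphism of L with τ(β) = −β, and ⟨λ,μ⟩ = (−1)ⁿ·c(λ·τ(μ)) the bilinear form given by the coefficient of β^{2n}. Then a k-linear automorphism h : L → L satisfies both ⟨hλ,hμ⟩ = ⟨λ,μ⟩ for all λ,μ ∈ L and h(βλ) = β·h(λ) for all λ ∈ L if and only if h is multiplication by some λ₀ ∈ L with λ₀·τ(λ₀) = 1; and for such h the determinant of h equals the norm N_{L/k}(λ₀). -/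
open Polynomial

/-!
Commuting with multiplication by `β`, which generates `L` as a `k`-algebra, makes `h`
`L`-linear, so `h` is multiplication by `λ₀ = h 1`. The functional `c` is nondegenerate on
`L`: a nonzero `u = q(β)` with `deg q = j ≤ 2n` has `c (u β^{2n-j})` equal to the leading
coefficient of `q`. Hence `c (λ₀ τ(λ₀) ν) = c ν` for all `ν` forces `λ₀ τ(λ₀) = 1`.
-/

namespace AdjoinRoot

variable {k : Type*} [Field k] {f : k[X]} {d : ℕ} (c : AdjoinRoot f →ₗ[k] k)

theorem functional_mk_mul_root_pow_eq_leadingCoeff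
    (hc : ∀ i ≤ d, c (root f ^ i) = if i = d then 1 else 0) {q : k[X]} (hq : q.natDegree ≤ d) :
    c (mk f q * root f ^ (d - q.natDegree)) = q.leadingCoeff := by
  rw [← aeval_eq, aeval_eq_sum_range, Finset.sum_mul, map_sum,
    Finset.sum_eq_single_of_mem q.natDegree (Finset.self_mem_range_succ _)]
  · rw [smul_mul_assoc, ← pow_add, map_smul, hc _ (by omega), if_pos (by omega), smul_eq_mul,
      mul_one, leadingCoeff]
  · intro i hi hij
    have : i < q.natDegree := by rw [Finset.mem_range] at hi; omega
    rw [smul_mul_assoc, ← pow_add, map_smul, hc _ (by omega), if_neg (by omega), smul_zero]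

theorem eq_zero_of_forall_functional_mul_eq_zero (hf : f.Monic) (hfdeg : f.natDegree = d + 1)
    (hc : ∀ i ≤ d, c (root f ^ i) = if i = d then 1 else 0) {u : AdjoinRoot f}
    (hu : ∀ v, c (u * v) = 0) : u = 0 := by
  obtain ⟨p, rfl⟩ := mk_surjective u
  rw [← mk_leftInverse hf (mk f p), modByMonicHom_mk] at hu ⊢
  by_contra hne
  have hdeg : (p %ₘ f).natDegree ≤ d := by
    have := natDegree_modByMonic_lt p hf (fun h ↦ by simp [h] at hfdeg)
    omega
  have hlead := functional_mk_mul_root_pow_eq_leadingCoeff c hc hdeg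
  rw [hu, eq_comm, leadingCoeff_eq_zero] at hlead
  exact hne (by rw [hlead, map_zero])

variable {R : Type*} [CommRing R] {p : R[X]}

theorem map_mul_of_map_root_mul (h : AdjoinRoot p →ₗ[R] AdjoinRoot p)
    (hroot : ∀ x, h (root p * x) = root p * h x) (a x : AdjoinRoot p) :
    h (a * x) = a * h x := by
  have ha : a ∈ Algebra.adjoin R {root p} := by rw [adjoinRoot_eq_top]; trivial
  induction ha using Algebra.adjoin_induction generalizing x with
  | mem _ hb => rw [Set.mem_singleton_iff.mp hb]; exact hroot x
  | algebraMap r => rw [← Algebra.smul_def, map_smul, Algebra.smul_def]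
  | add a b _ _ iha ihb => rw [add_mul, map_add, iha, ihb, add_mul]
  | mul a b _ _ iha ihb => rw [mul_assoc, iha, ihb, mul_assoc]

theorem apply_eq_apply_one_mul_of_map_root_mul (h : AdjoinRoot p →ₗ[R] AdjoinRoot p)
    (hroot : ∀ x, h (root p * x) = root p * h x) (x : AdjoinRoot p) : h x = h 1 * x := by
  rw [← mul_one x, map_mul_of_map_root_mul h hroot, mul_one, mul_comm]

end AdjoinRoot

theorem forall_functional_mul_mul_map_mul_iff {k A : Type*} [CommRing k] [CommRing A]
    [Algebra k A] (c : A →ₗ[k] k) (hc : ∀ u, (∀ v, c (u * v) = 0) → u = 0)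
    (τ : A ≃ₐ[k] A) (a : A) :
    (∀ x y, c (a * x * τ (a * y)) = c (x * τ y)) ↔ a * τ a = 1 := by
  constructor
  · intro ha
    rw [← sub_eq_zero]
    refine hc _ fun v ↦ ?_
    have := ha v 1
    rw [mul_one, map_one, mul_one] at this
    rw [sub_mul, one_mul, map_sub, ← this, sub_eq_zero, mul_right_comm]
  · intro ha x y
    rw [map_mul τ, show a * x * (τ a * τ y) = a * τ a * (x * τ y) by ring, ha, one_mul]

theorem stabilizer_of_skew_self_adjoint_operator_general {k : Type*} [Field k]
    (n : ℕ)
    (g : k[X]) (hg : g.Monic) (hgdeg : g.natDegree = n)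
    (f : k[X]) (hf : f = X * g.comp (X ^ 2))
    (c : AdjoinRoot f →ₗ[k] k)
    (hc : ∀ i : ℕ, i ≤ 2 * n → c (AdjoinRoot.root f ^ i) = if i = 2 * n then 1 else 0)
    (τ : AdjoinRoot f ≃ₐ[k] AdjoinRoot f)
    (B : AdjoinRoot f → AdjoinRoot f → k)
    (hB : ∀ lam mu : AdjoinRoot f, B lam mu = (-1 : k) ^ n * c (lam * τ mu))
    (h : AdjoinRoot f ≃ₗ[k] AdjoinRoot f) :
    (((∀ lam mu : AdjoinRoot f, B (h lam) (h mu) = B lam mu) ∧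
        (∀ lam : AdjoinRoot f, h (AdjoinRoot.root f * lam) = AdjoinRoot.root f * h lam)) ↔
      ∃ lam₀ : AdjoinRoot f, lam₀ * τ lam₀ = 1 ∧
        ∀ lam : AdjoinRoot f, h lam = lam₀ * lam) ∧
    (∀ lam₀ : AdjoinRoot f, lam₀ * τ lam₀ = 1 →
      (∀ lam : AdjoinRoot f, h lam = lam₀ * lam) →
      LinearMap.det h.toLinearMap = LinearMap.det (LinearMap.mulLeft k lam₀)) := by
  have hgX2 : (g.comp (X ^ 2)).Monic := hg.comp (monic_X_pow 2) (by simp)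
  have hfmonic : f.Monic := hf ▸ monic_X.mul hgX2
  have hfdeg : f.natDegree = 2 * n + 1 := by
    rw [hf, natDegree_mul X_ne_zero hgX2.ne_zero, natDegree_comp, hgdeg]
    simp [add_comm, mul_comm]
  have hnondeg : ∀ u, (∀ v, c (u * v) = 0) → u = 0 := fun _ ↦
    AdjoinRoot.eq_zero_of_forall_functional_mul_eq_zero c hfmonic hfdeg hc
  have hB_iff (a : AdjoinRoot f) :
      (∀ x y, B (a * x) (a * y) = B x y) ↔ a * τ a = 1 := by
    simp only [hB, mul_right_inj' (pow_ne_zero n (neg_ne_zero.mpr (one_ne_zero (α := k))))]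
    exact forall_functional_mul_mul_map_mul_iff c hnondeg τ a
  refine ⟨⟨fun ⟨hiso, hroot⟩ ↦ ?_, fun ⟨a, ha, hmul⟩ ↦ ?_⟩, fun a _ hmul ↦ ?_⟩
  · have hmul : ∀ x, h x = h 1 * x :=
      AdjoinRoot.apply_eq_apply_one_mul_of_map_root_mul h.toLinearMap hroot
    refine ⟨h 1, (hB_iff (h 1)).mp fun x y ↦ ?_, hmul⟩
    rw [← hmul, ← hmul]
    exact hiso x y
  · refine ⟨?_, fun x ↦ by rw [hmul, hmul, mul_left_comm]⟩
    simpa only [hmul] using (hB_iff a).mpr ha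
  · congr 1
    ext x
    simp [hmul x]

/-- Let `k` be a field of characteristic `≠ 2`, `n ≥ 1`, `g ∈ k[x]` monic of degree `n`
with `f(x) = x·g(x²)` separable, `L = k[x]/(f)` with `β` the image of `x`, `τ` the
`k`-algebra automorphism of `L` with `τ(β) = -β`, and `⟨λ,μ⟩ = (-1)ⁿ·c(λ·τ(μ))` the
bilinear form given by the coefficient of `β^{2n}`.  Then a `k`-linear automorphism `h` of
`L` preserves `⟨·,·⟩` and commutes with multiplication by `β` if and only if `h` is
multiplication by some `λ₀ ∈ L` with `λ₀·τ(λ₀) = 1`; and for such `h` the determinant of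
`h` equals the norm `N_{L/k}(λ₀)`, i.e. the determinant of multiplication by `λ₀`. -/
theorem stabilizer_of_skew_self_adjoint_operator {k : Type*} [Field k] (hchar : (2 : k) ≠ 0)
    (n : ℕ) (hn : 1 ≤ n)
    (g : k[X]) (hg : g.Monic) (hgdeg : g.natDegree = n)
    (f : k[X]) (hf : f = X * g.comp (X ^ 2)) (hsep : f.Separable)
    (c : AdjoinRoot f →ₗ[k] k)
    (hc : ∀ i : ℕ, i ≤ 2 * n → c (AdjoinRoot.root f ^ i) = if i = 2 * n then 1 else 0)
    (τ : AdjoinRoot f ≃ₐ[k] AdjoinRoot f) (hτ : τ (AdjoinRoot.root f) = -AdjoinRoot.root f)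
    (B : AdjoinRoot f → AdjoinRoot f → k)
    (hB : ∀ lam mu : AdjoinRoot f, B lam mu = (-1 : k) ^ n * c (lam * τ mu))
    (h : AdjoinRoot f ≃ₗ[k] AdjoinRoot f) :
    (((∀ lam mu : AdjoinRoot f, B (h lam) (h mu) = B lam mu) ∧
        (∀ lam : AdjoinRoot f, h (AdjoinRoot.root f * lam) = AdjoinRoot.root f * h lam)) ↔
      ∃ lam₀ : AdjoinRoot f, lam₀ * τ lam₀ = 1 ∧
        ∀ lam : AdjoinRoot f, h lam = lam₀ * lam) ∧
    (∀ lam₀ : AdjoinRoot f, lam₀ * τ lam₀ = 1 →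
      (∀ lam : AdjoinRoot f, h lam = lam₀ * lam) →
      LinearMap.det h.toLinearMap = LinearMap.det (LinearMap.mulLeft k lam₀)) :=
  stabilizer_of_skew_self_adjoint_operator_general n g hg hgdeg f hf c hc τ B hB h
end

section
/- Let k be a field of characteristic ≠ 2, let n ≥ 1, let W be the split orthogonal space of dimension 2n+1 over k, let w ∈ W, and let T be a skew self-adjoint endomorphism of W (⟨Tv,v'⟩ = −⟨v,Tv'⟩ for all v,v'). Then: (i) the 2n+1 vectors w, T(w), T²(w), …, T^{2n}(w) form a basis of W if and only if the determinant of the (2n+1)×(2n+1) matrix with entries ⟨Tⁱ(w), Tʲ(w)⟩ (0 ≤ i,j ≤ 2n) is nonzero; and (ii) if these vectors form a basis, then the only linear automorphism g of W satisfying ⟨gv,gv'⟩ = ⟨v,v'⟩ for all v,v', g(w) = w, and g∘T = T∘g is the identity. -/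
/-!
The Gram matrix of the family `vᵢ = Tⁱ w` with respect to `⟨·,·⟩` factors as `A J Aᵀ`, where `A`
has rows `vᵢ` and `J = splitGram k n` is a permutation matrix; hence its determinant is
`± (det A)²`, which vanishes exactly when the `vᵢ` fail to form a basis. If they do form a basis,
any `g` commuting with `T` and fixing `w` fixes every `vᵢ`, so `g = 1`.
-/

open Matrix

lemma splitGram_eq_permMatrix (k : Type*) [Field k] (n : ℕ) :
    splitGram k n = (Fin.revPerm : Equiv.Perm (Fin (2 * n + 1))).permMatrix k := by
  ext i j
  have hrev : (i : ℕ) + (j : ℕ) = 2 * n ↔ Fin.rev i = j := by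
    rw [Fin.ext_iff, Fin.val_rev]
    omega
  simp only [splitGram, of_apply, Equiv.Perm.permMatrix, PEquiv.toMatrix,
    Equiv.toPEquiv_apply, Option.mem_def, Option.some_inj, Fin.revPerm_apply, hrev]

lemma det_splitGram_ne_zero (k : Type*) [Field k] (n : ℕ) : (splitGram k n).det ≠ 0 := by
  rw [splitGram_eq_permMatrix, det_permutation]
  rcases Int.units_eq_one_or (Equiv.Perm.sign (Fin.revPerm : Equiv.Perm (Fin (2 * n + 1))))
    with h | h <;> simp [h]

lemma Matrix.of_dotProduct_mulVec_eq_mul_mul_transpose {m R : Type*} [Fintype m] [CommSemiring R]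
    (A J : Matrix m m R) : of (fun i j => A i ⬝ᵥ J *ᵥ A j) = A * J * Aᵀ := by
  ext i j
  rw [mul_mul_apply, transpose_transpose, of_apply]

lemma det_gram_splitBilin {k : Type*} [Field k] {n : ℕ}
    (v : Fin (2 * n + 1) → Fin (2 * n + 1) → k) :
    (of fun i j => splitBilin (v i) (v j)).det = (of v).det * (splitGram k n).det * (of v).det := by
  have hgram : (of fun i j => splitBilin (v i) (v j)) = of v * splitGram k n * (of v)ᵀ :=
    of_dotProduct_mulVec_eq_mul_mul_transpose (of v) (splitGram k n)
  rw [hgram, det_mul, det_mul, det_transpose]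

lemma linearIndependent_and_span_eq_top_iff_det_ne_zero {K m : Type*} [Field K] [Fintype m]
    [DecidableEq m] (v : m → m → K) :
    LinearIndependent K v ∧ Submodule.span K (Set.range v) = ⊤ ↔ (of v).det ≠ 0 := by
  rw [(Pi.basisFun K m).is_basis_iff_det, Module.Basis.det_apply,
    Module.Basis.coePiBasisFun.toMatrix_eq_transpose, isUnit_iff_ne_zero, ← det_transpose (of v)]
  rfl

lemma linearIndependent_and_span_eq_top_iff_det_gram_splitBilin_ne_zero {k : Type*} [Field k]
    {n : ℕ} (v : Fin (2 * n + 1) → Fin (2 * n + 1) → k) :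
    LinearIndependent k v ∧ Submodule.span k (Set.range v) = ⊤ ↔
      (of fun i j => splitBilin (v i) (v j)).det ≠ 0 := by
  rw [linearIndependent_and_span_eq_top_iff_det_ne_zero, det_gram_splitBilin, mul_ne_zero_iff,
    mul_ne_zero_iff, and_iff_left (det_splitGram_ne_zero k n), and_self]

lemma Matrix.eq_one_of_mulVec_eq_self {m ι R : Type*} [Fintype m] [DecidableEq m] [CommSemiring R]
    {g : Matrix m m R} {v : ι → m → R} (hv : Submodule.span R (Set.range v) = ⊤)
    (hg : ∀ i, g *ᵥ v i = v i) : g = 1 :=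
  toLin'.injective <| (LinearMap.ext_on_range hv fun i => by simpa using hg i).trans toLin'_one.symm

lemma Matrix.mulVec_pow_mulVec_eq_of_commute {m R : Type*} [Fintype m] [DecidableEq m]
    [CommSemiring R] {g T : Matrix m m R} {w : m → R} (hgT : Commute g T) (hgw : g *ᵥ w = w)
    (i : ℕ) : g *ᵥ (T ^ i *ᵥ w) = T ^ i *ᵥ w := by
  rw [mulVec_mulVec, (hgT.pow_right i).eq, ← mulVec_mulVec, hgw]

theorem basis_iff_gram_det_ne_zero_and_trivial_stabilizer_general {k : Type*} [Field k]
    (n : ℕ) (w : Fin (2 * n + 1) → k)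
    (T : Matrix (Fin (2 * n + 1)) (Fin (2 * n + 1)) k) :
    ((LinearIndependent k (fun i : Fin (2 * n + 1) => (T ^ (i : ℕ)).mulVec w) ∧
        Submodule.span k (Set.range fun i : Fin (2 * n + 1) => (T ^ (i : ℕ)).mulVec w) = ⊤) ↔
      Matrix.det (Matrix.of fun i j : Fin (2 * n + 1) =>
        splitBilin ((T ^ (i : ℕ)).mulVec w) ((T ^ (j : ℕ)).mulVec w)) ≠ 0) ∧
    ((LinearIndependent k (fun i : Fin (2 * n + 1) => (T ^ (i : ℕ)).mulVec w) ∧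
        Submodule.span k (Set.range fun i : Fin (2 * n + 1) => (T ^ (i : ℕ)).mulVec w) = ⊤) →
      ∀ g : Matrix (Fin (2 * n + 1)) (Fin (2 * n + 1)) k,
        (∀ v v' : Fin (2 * n + 1) → k,
          splitBilin (g.mulVec v) (g.mulVec v') = splitBilin v v') →
        g.mulVec w = w → g * T = T * g → g = 1) :=
  ⟨linearIndependent_and_span_eq_top_iff_det_gram_splitBilin_ne_zero _,
    fun ⟨_, hspan⟩ _ _ hgw hgT =>
      eq_one_of_mulVec_eq_self hspan fun i => mulVec_pow_mulVec_eq_of_commute hgT hgw i⟩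

/-- Let `k` be a field of characteristic `≠ 2`, `n ≥ 1`, `W` the split orthogonal space of
dimension `2n+1` over `k`, `w ∈ W`, and `T` a skew self-adjoint endomorphism of `W`.
Then: (i) the vectors `w, T w, …, T^{2n} w` form a basis of `W` iff
`det(⟨Tⁱw, Tʲw⟩)_{0 ≤ i,j ≤ 2n} ≠ 0`; and (ii) if they form a basis, the only isometry `g`
of `W` fixing `w` and commuting with `T` is the identity. -/
theorem basis_iff_gram_det_ne_zero_and_trivial_stabilizer {k : Type*} [Field k]
    (hchar : (2 : k) ≠ 0) (n : ℕ) (hn : 1 ≤ n) (w : Fin (2 * n + 1) → k)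
    (T : Matrix (Fin (2 * n + 1)) (Fin (2 * n + 1)) k)
    (hskew : ∀ v v' : Fin (2 * n + 1) → k,
      splitBilin (T.mulVec v) v' = - splitBilin v (T.mulVec v')) :
    ((LinearIndependent k (fun i : Fin (2 * n + 1) => (T ^ (i : ℕ)).mulVec w) ∧
        Submodule.span k (Set.range fun i : Fin (2 * n + 1) => (T ^ (i : ℕ)).mulVec w) = ⊤) ↔
      Matrix.det (Matrix.of fun i j : Fin (2 * n + 1) =>
        splitBilin ((T ^ (i : ℕ)).mulVec w) ((T ^ (j : ℕ)).mulVec w)) ≠ 0) ∧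
    ((LinearIndependent k (fun i : Fin (2 * n + 1) => (T ^ (i : ℕ)).mulVec w) ∧
        Submodule.span k (Set.range fun i : Fin (2 * n + 1) => (T ^ (i : ℕ)).mulVec w) = ⊤) →
      ∀ g : Matrix (Fin (2 * n + 1)) (Fin (2 * n + 1)) k,
        (∀ v v' : Fin (2 * n + 1) → k,
          splitBilin (g.mulVec v) (g.mulVec v') = splitBilin v v') →
        g.mulVec w = w → g * T = T * g → g = 1) :=
  basis_iff_gram_det_ne_zero_and_trivial_stabilizer_general n w T
end
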